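/- arXiv:1512.02443 — 9 statements merged into one kernel-verified Lean document; each statement's English description precedes it below -/
import Mathlib

section
/- Let G be a 2-connected simple graph and let C be a cycle in G of odd length. Then every edge e of G that does not lie on C is contained in a cycle of even length. -/
open SimpleGraph

/-- A graph is 2-connected if it has more than 2 vertices, is connected, and
remains connected after the deletion of any single vertex. -/
def TwoConnected {V : Type*} [Fintype V] (G : SimpleGraph V) : Prop :=
  2 < Fintype.card V ∧ G.Connected ∧ ∀ v : V, (G.induce {x | x ≠ v}).Connected

/-!
An ear of a cycle `C` is a path between two distinct vertices of `C` whose interior avoids `C`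
(and which is not itself an edge of `C`). An ear `W` splits `C` into two arcs, and `W` together
with either arc is a cycle; the two lengths add up to `|C| + 2|W|`, so when `C` is odd one of
these cycles is even and the other odd, and both contain `W`.

It therefore suffices to put `e = xy` on an ear of an odd cycle. If `x` lies on `C`, a path from
`y` back to `C` avoiding `x` gives such an ear. Otherwise 2-connectivity puts `x` on a cycle
through an edge of `C`, and cutting this cycle at its first vertices on `C` on either side of `x`
gives an ear `W` of `C` through `x`. If `e` lies on `W` we are done; if not, the odd cycle formed
by `W` and `C` passes through `x` but not through `e`, and the first case applies to it.
-/

namespace SimpleGraph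

variable {V : Type*} {G : SimpleGraph V}

namespace Walk

variable {a b c u v w x y z : V}

lemma eq_toWalk_of_length_eq_one : ∀ {p : G.Walk u v} (hp : p.length = 1),
    p = (adj_of_length_eq_one hp).toWalk
  | cons _ nil, _ => rfl

lemma IsPath.start_notMem_support_tail {p : G.Walk u v} (hp : p.IsPath) :
    u ∉ p.support.tail := by
  have h := hp.support_nodup
  rw [← cons_tail_support] at h
  exact (List.nodup_cons.mp h).1

lemma IsPath.append {p : G.Walk u v} {q : G.Walk v w} (hp : p.IsPath) (hq : q.IsPath)
    (h : ∀ x ∈ p.support, x ∈ q.support → x = v) : (p.append q).IsPath := by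
  rw [isPath_def, support_append]
  refine hp.support_nodup.append hq.support_nodup.tail fun x hx hx' => ?_
  obtain rfl := h x hx (List.mem_of_mem_tail hx')
  exact hq.start_notMem_support_tail hx'

lemma exists_eq_append_first_mem (S : Set V) (p : G.Walk x y) (hy : y ∈ S) :
    ∃ c ∈ S, ∃ (q : G.Walk x c) (r : G.Walk c y), p = q.append r ∧
      ∀ w ∈ q.support, w ∈ S → w = c := by
  induction p with
  | nil => exact ⟨_, hy, nil, nil, rfl, by simp⟩
  | @cons x _ _ h p ih =>
    by_cases hx : x ∈ S
    · exact ⟨x, hx, nil, cons h p, rfl, by simp⟩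
    obtain ⟨c, hc, q, r, rfl, hq⟩ := ih hy
    refine ⟨c, hc, cons h q, r, rfl, ?_⟩
    rintro w (_ | ⟨_, hw⟩) hwS
    · exact absurd hwS hx
    · exact hq w hw hwS

structure IsEar (W : G.Walk a b) (C : G.Walk c c) : Prop where
  isPath : W.IsPath
  ne : a ≠ b
  start_mem_support : a ∈ C.support
  end_mem_support : b ∈ C.support
  eq_or_eq_of_mem_support : ∀ x ∈ W.support, x ∈ C.support → x = a ∨ x = b
  notMem_edges_of_length_eq_one : W.length = 1 → s(a, b) ∉ C.edges

variable [DecidableEq V]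

lemma IsCycle.isPath_dropUntil {C : G.Walk u u} (hC : C.IsCycle) (hv : v ∈ C.support)
    (hvu : v ≠ u) : (C.dropUntil v hv).IsPath := by
  rw [← take_spec C hv] at hC
  exact hC.isPath_of_append_right (not_nil_of_ne hvu.symm)

lemma IsCycle.eq_or_eq_of_mem_takeUntil_of_mem_dropUntil {C : G.Walk u u} (hC : C.IsCycle)
    (hv : v ∈ C.support) (hw₁ : w ∈ (C.takeUntil v hv).support)
    (hw₂ : w ∈ (C.dropUntil v hv).support) : w = u ∨ w = v := by
  have hnd := hC.support_nodup
  rw [← take_spec C hv, tail_support_append] at hnd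
  rw [← cons_tail_support] at hw₁ hw₂
  rcases List.mem_cons.mp hw₁ with rfl | hw₁
  · exact .inl rfl
  rcases List.mem_cons.mp hw₂ with rfl | hw₂
  · exact .inr rfl
  exact absurd hw₂ (List.disjoint_of_nodup_append hnd hw₁)

theorem IsCycle.exists_isCycle_append_of_isEar {C : G.Walk c c} {W : G.Walk a b}
    (hC : C.IsCycle) (hW : W.IsEar C) :
    ∃ p q : G.Walk b a, (W.append p).IsCycle ∧ (W.append q).IsCycle ∧
      (p.edges ++ q.edges).Perm C.edges := by
  set C' := C.rotate a hW.start_mem_support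
  have hC' : C'.IsCycle := hC.rotate _
  have hmem : ∀ {x}, x ∈ C'.support ↔ x ∈ C.support := mem_support_rotate_iff ..
  have hedges : C'.edges.Perm C.edges := (rotate_edges ..).perm
  have hb : b ∈ C'.support := hmem.mpr hW.end_mem_support
  have hab := hW.ne
  have hcycle (p : G.Walk b a) (hp : p.IsPath) (hpV : p.support ⊆ C'.support)
      (hpE : p.edges ⊆ C'.edges) : (W.append p).IsCycle := by
    refine hW.isPath.isCycle_append hp (fun x hx₁ hx₂ => ?_) ?_
    · rcases hW.eq_or_eq_of_mem_support x (List.mem_of_mem_tail hx₁)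
        (hmem.mp (hpV (List.mem_of_mem_tail hx₂))) with rfl | rfl
      · exact hW.isPath.start_notMem_support_tail hx₁
      · exact hp.start_notMem_support_tail hx₂
    · by_contra! hlen
      have hW1 : W.length = 1 := by have := mt (eq_of_length_eq_zero (p := W)) hab; omega
      have hp1 : p.length = 1 := by have := mt (eq_of_length_eq_zero (p := p)) hab.symm; omega
      refine hW.notMem_edges_of_length_eq_one hW1 (hedges.subset (hpE ?_))
      rw [eq_toWalk_of_length_eq_one hp1, Adj.edges_toWalk, Sym2.eq_swap]
      exact List.mem_singleton_self _
  refine ⟨C'.dropUntil b hb, (C'.takeUntil b hb).reverse,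
    hcycle _ (hC'.isPath_dropUntil hb hab.symm) (support_dropUntil_subset_support ..)
      (edges_dropUntil_subset_edges ..),
    hcycle _ (hC'.isPath_takeUntil hb).reverse
      (by simpa using support_takeUntil_subset_support ..)
      (by simpa using edges_takeUntil_subset_edges ..), ?_⟩
  rw [edges_reverse]
  refine (List.perm_append_comm.trans ((List.reverse_perm _).append_right _)).trans ?_
  rwa [← edges_append, take_spec]

theorem IsCycle.exists_even_odd_of_isEar {C : G.Walk c c} {W : G.Walk a b}
    (hC : C.IsCycle) (hodd : Odd C.length) (hW : W.IsEar C) :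
    ∃ p q : G.Walk b a, (W.append p).IsCycle ∧ Even (W.append p).length ∧
      (W.append q).IsCycle ∧ Odd (W.append q).length ∧ q.edges ⊆ C.edges := by
  obtain ⟨p, q, hp, hq, hpq⟩ := hC.exists_isCycle_append_of_isEar hW
  have hsum : Odd ((W.append p).length + (W.append q).length) := by
    have hlen := hpq.length_eq
    simp only [List.length_append, length_edges] at hlen
    obtain ⟨k, hk⟩ := hodd
    exact ⟨W.length + k, by simp only [length_append]; omega⟩
  rcases Nat.even_or_odd (W.append p).length with hpe | hpo
  · exact ⟨p, q, hp, hpe, hq, (Nat.odd_add'.mp hsum).mpr hpe,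
      fun e he => hpq.subset (List.mem_append_right _ he)⟩
  · exact ⟨q, p, hq, (Nat.odd_add.mp hsum).mp hpo, hp, hpo,
      fun e he => hpq.subset (List.mem_append_left _ he)⟩


theorem exists_isEar_mem_support_of_isPath {C : G.Walk c c} {t d : G.Walk x u}
    (ht : t.IsPath) (hd : d.IsPath) (htd : ∀ w ∈ t.support, w ∈ d.support → w = x ∨ w = u)
    (hx : x ∉ C.support) (hu : u ∈ C.support) (hv : v ∈ t.support) (hvC : v ∈ C.support)
    (hvu : v ≠ u) : ∃ (a b : V) (W : G.Walk a b), W.IsEar C ∧ x ∈ W.support := by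
  -- Stopping `t` at `v` keeps `u` off `q₁`, so the two ends of the ear differ.
  obtain ⟨t', ht', hut', ht't⟩ : ∃ t' : G.Walk x v, t'.IsPath ∧ u ∉ t'.support ∧
      t'.support ⊆ t.support :=
    ⟨_, ht.takeUntil hv, endpoint_notMem_support_takeUntil ht hv hvu.symm,
      support_takeUntil_subset_support ..⟩
  obtain ⟨b, hb, q₁, r₁, rfl, hq₁⟩ := t'.exists_eq_append_first_mem {w | w ∈ C.support} hvC
  obtain ⟨a, ha, q₂, r₂, rfl, hq₂⟩ := d.exists_eq_append_first_mem {w | w ∈ C.support} hu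
  have huq₁ : u ∉ q₁.support := fun h => hut' (support_subset_support_append_left _ _ h)
  have hcommon (w : V) (h₂ : w ∈ q₂.support) (h₁ : w ∈ q₁.support) : w = x :=
    (htd w (ht't (support_subset_support_append_left _ _ h₁))
      (support_subset_support_append_left _ _ h₂)).resolve_right fun h => huq₁ (h ▸ h₁)
  have hab : a ≠ b := by
    rintro rfl
    exact hx (hcommon a q₂.end_mem_support q₁.end_mem_support ▸ ha)
  have hxW : x ∈ (q₂.reverse.append q₁).support :=
    (mem_support_append_iff ..).mpr (.inr q₁.start_mem_support)
  refine ⟨a, b, q₂.reverse.append q₁, ⟨?_, hab, ha, hb, ?_, fun h1 => ?_⟩, hxW⟩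
  · exact hd.of_append_left.reverse.append ht'.of_append_left
      fun w h₂ h₁ => hcommon w (by simpa using h₂) h₁
  · intro w hw hwC
    rw [mem_support_append_iff, support_reverse, List.mem_reverse] at hw
    exact hw.imp (hq₂ w · hwC) (hq₁ w · hwC)
  · rw [eq_toWalk_of_length_eq_one h1, Adj.support_toWalk] at hxW
    obtain rfl | rfl : x = a ∨ x = b := by simpa using hxW
    · exact absurd ha hx
    · exact absurd hb hx

theorem IsCycle.exists_isEar_mem_support {C : G.Walk c c} {Z : G.Walk z z}
    (hZ : Z.IsCycle) (hxZ : x ∈ Z.support) (hx : x ∉ C.support) (hfZ : s(u, v) ∈ Z.edges)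
    (hfC : s(u, v) ∈ C.edges) : ∃ (a b : V) (W : G.Walk a b), W.IsEar C ∧ x ∈ W.support := by
  set Z' := Z.rotate x hxZ
  have hZ' : Z'.IsCycle := hZ.rotate hxZ
  have hu : u ∈ Z'.support := (mem_support_rotate_iff ..).mpr (Z.fst_mem_support_of_mem_edges hfZ)
  have hv : v ∈ Z'.support := (mem_support_rotate_iff ..).mpr (Z.snd_mem_support_of_mem_edges hfZ)
  have huC := C.fst_mem_support_of_mem_edges hfC
  have hvC := C.snd_mem_support_of_mem_edges hfC
  have hvu : v ≠ u := (C.adj_of_mem_edges hfC).ne'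
  have hux : u ≠ x := fun h => hx (h ▸ huC)
  have ht := hZ'.isPath_takeUntil hu
  have hd := (hZ'.isPath_dropUntil hu hux).reverse
  have htd : ∀ w ∈ (Z'.takeUntil u hu).support, w ∈ (Z'.dropUntil u hu).reverse.support →
      w = x ∨ w = u := fun _ h₁ h₂ =>
    hZ'.eq_or_eq_of_mem_takeUntil_of_mem_dropUntil hu h₁ (by simpa using h₂)
  have hv' : v ∈ (Z'.takeUntil u hu).support ∨ v ∈ (Z'.dropUntil u hu).reverse.support := by
    rw [support_reverse, List.mem_reverse, ← mem_support_append_iff, take_spec]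
    exact hv
  rcases hv' with hv' | hv'
  · exact exists_isEar_mem_support_of_isPath ht hd htd hx huC hv' hvC hvu
  · exact exists_isEar_mem_support_of_isPath hd ht (fun w h₂ h₁ => htd w h₁ h₂) hx huC hv' hvC hvu

end Walk

theorem exists_isPath_notMem_support {v a b : V} (h : (G.induce {x | x ≠ v}).Connected)
    (ha : a ≠ v) (hb : b ≠ v) : ∃ p : G.Walk a b, p.IsPath ∧ v ∉ p.support := by
  obtain ⟨p, hp⟩ := (h.preconnected ⟨a, ha⟩ ⟨b, hb⟩).exists_isPath
  let f := (Embedding.induce (G := G) {x | x ≠ v}).toHom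
  have hv : v ∉ (p.map f).support := by
    rw [Walk.support_map, List.mem_map]
    rintro ⟨w, -, hw⟩
    exact w.2 hw
  exact ⟨p.map f, hp.map (Embedding.induce (G := G) _).injective, hv⟩

end SimpleGraph

namespace TwoConnected

open Walk

variable {V : Type*} [Fintype V] {G : SimpleGraph V} {a c u v x y : V}

theorem exists_isCycle_mem_edges (hG : TwoConnected G) (h : G.Adj u v) :
    ∃ Z : G.Walk u u, Z.IsCycle ∧ s(u, v) ∈ Z.edges := by
  classical
  obtain ⟨w₀, -, hw₀⟩ := Finset.exists_mem_notMem_of_card_lt_card (s := {u, v})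
    (t := Finset.univ) (Finset.card_le_two.trans_lt hG.1)
  simp only [Finset.mem_insert, Finset.mem_singleton, not_or] at hw₀
  obtain ⟨P, -, hvP⟩ := exists_isPath_notMem_support (hG.2.2 v) h.ne hw₀.2
  have hP : ¬ P.Nil := not_nil_of_ne (Ne.symm hw₀.1)
  have huw : G.Adj u P.snd := P.adj_snd hP
  have hwv : P.snd ≠ v := fun h' => hvP (h' ▸ P.getVert_mem_support 1)
  obtain ⟨Q, hQ, huQ⟩ := exists_isPath_notMem_support (hG.2.2 u) h.ne' huw.ne'
  refine ⟨cons h (Q.concat huw.symm), (cons_isCycle_iff _ h).mpr ⟨hQ.concat huQ _, ?_⟩, by simp⟩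
  simp only [edges_concat, List.concat_eq_append, List.mem_append, List.mem_singleton]
  rintro (he | he)
  · exact huQ (Q.fst_mem_support_of_mem_edges he)
  · rcases Sym2.eq_iff.mp he with ⟨h₁, -⟩ | ⟨-, h₂⟩
    · exact huw.ne h₁
    · exact hwv h₂.symm

variable [DecidableEq V]

theorem exists_isEar_cons (hG : TwoConnected G) {C : G.Walk c c} (hC : C.IsCycle)
    (ha : a ∈ C.support) (h : G.Adj a y) (hy : s(a, y) ∉ C.edges) :
    ∃ (b : V) (q : G.Walk y b), (cons h q).IsEar C := by
  obtain ⟨s, hs, hsa⟩ : ∃ s ∈ C.support, s ≠ a := by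
    by_cases hac : a = c
    · subst hac
      exact ⟨C.snd, C.getVert_mem_support 1, (C.adj_snd hC.not_nil).ne'⟩
    · exact ⟨c, C.start_mem_support, Ne.symm hac⟩
  obtain ⟨P, hP, haP⟩ := exists_isPath_notMem_support (hG.2.2 a) h.ne' hsa
  obtain ⟨b, hb, q, r, rfl, hq⟩ := P.exists_eq_append_first_mem {x | x ∈ C.support} hs
  have haq : a ∉ q.support := fun h' => haP (support_subset_support_append_left _ _ h')
  refine ⟨b, q, ⟨(cons_isPath_iff h q).mpr ⟨hP.of_append_left, haq⟩,
    fun hab => haq (hab ▸ q.end_mem_support), ha, hb, ?_, fun h1 => ?_⟩⟩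
  · rintro x (_ | ⟨_, hx⟩) hxC
    · exact .inl rfl
    · exact .inr (hq x hx hxC)
  · obtain rfl : y = b := eq_of_length_eq_zero (by simpa using h1)
    exact hy

theorem exists_isCycle_mem_support_mem_edges (hG : TwoConnected G) (h : G.Adj u v)
    (x : V) : ∃ (c : V) (Z : G.Walk c c), Z.IsCycle ∧ x ∈ Z.support ∧ s(u, v) ∈ Z.edges := by
  obtain ⟨p⟩ := hG.2.1.preconnected x u
  induction p with
  | nil =>
    obtain ⟨Z, hZ, hf⟩ := hG.exists_isCycle_mem_edges h
    exact ⟨_, Z, hZ, Z.start_mem_support, hf⟩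
  | @cons x x' _ hxx' _ ih =>
    obtain ⟨c, Z, hZ, hx'Z, hf⟩ := ih h
    by_cases hxZ : x ∈ Z.support
    · exact ⟨c, Z, hZ, hxZ, hf⟩
    obtain ⟨b, q, hW⟩ := hG.exists_isEar_cons hZ hx'Z hxx'.symm
      fun he => hxZ (Z.snd_mem_support_of_mem_edges he)
    obtain ⟨p₁, p₂, hp₁, hp₂, hperm⟩ := hZ.exists_isCycle_append_of_isEar hW
    have hxW : x ∈ (cons hxx'.symm q).support := by simp
    rcases List.mem_append.mp (hperm.symm.subset hf) with hf | hf
    · exact ⟨x', _, hp₁, support_subset_support_append_left _ _ hxW, by simp [hf]⟩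
    · exact ⟨x', _, hp₂, support_subset_support_append_left _ _ hxW, by simp [hf]⟩

theorem exists_even_isCycle_of_mem_support (hG : TwoConnected G) {C : G.Walk c c}
    (hC : C.IsCycle) (hodd : Odd C.length) (hx : x ∈ C.support) (h : G.Adj x y)
    (he : s(x, y) ∉ C.edges) :
    ∃ (b : V) (D : G.Walk b b), D.IsCycle ∧ Even D.length ∧ s(x, y) ∈ D.edges := by
  obtain ⟨b, q, hW⟩ := hG.exists_isEar_cons hC hx h he
  obtain ⟨p, -, hp, hpe, -⟩ := hC.exists_even_odd_of_isEar hodd hW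
  exact ⟨x, _, hp, hpe, by simp⟩

end TwoConnected

/-- In a 2-connected graph, every edge not lying on a given odd cycle is
contained in an even cycle. -/
theorem stmt_0 {V : Type*} [Fintype V] (G : SimpleGraph V) (hG : TwoConnected G)
    {a : V} (C : G.Walk a a) (hC : C.IsCycle) (hCodd : Odd C.length)
    (e : Sym2 V) (he : e ∈ G.edgeSet) (heC : e ∉ C.edges) :
    ∃ (b : V) (D : G.Walk b b), D.IsCycle ∧ Even D.length ∧ e ∈ D.edges := by
  classical
  induction e using Sym2.ind with | _ x y => ?_
  have h : G.Adj x y := he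
  by_cases hx : x ∈ C.support
  · exact hG.exists_even_isCycle_of_mem_support hC hCodd hx h heC
  have hf := C.mk_start_snd_mem_edges hC.not_nil
  obtain ⟨c, Z, hZ, hxZ, hfZ⟩ :=
    hG.exists_isCycle_mem_support_mem_edges (C.adj_of_mem_edges hf) x
  obtain ⟨a', b', W, hW, hxW⟩ := hZ.exists_isEar_mem_support hxZ hx hfZ hf
  obtain ⟨p, q, hp, hpe, hq, hqo, hqC⟩ := hC.exists_even_odd_of_isEar hCodd hW
  by_cases heW : s(x, y) ∈ W.edges
  · exact ⟨a', _, hp, hpe, by simp [heW]⟩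
  · refine hG.exists_even_isCycle_of_mem_support hq hqo
      (Walk.support_subset_support_append_left _ _ hxW) h ?_
    rw [Walk.edges_append, List.mem_append, not_or]
    exact ⟨heW, fun h' => heC (hqC h')⟩
end

section
/- Let G be a 2-connected simple graph that is not bipartite. Then every edge of G is contained in a cycle of odd length. -/
open SimpleGraph

/-! A shortest odd closed walk is a cycle, so a non-bipartite graph has an odd cycle. If `u` lies
on an odd cycle `C` and `uv` is an edge, a path from `v` to `C` in `G - u` first meets `C` at some
`w ≠ u`; the two `u`–`w` arcs of `C` have lengths of different parity, so one of them, closed up by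
the path and the edge `uv`, is an odd cycle through `uv`. In particular `v` lies on an odd cycle,
so by connectivity every vertex does, and then so does every edge. -/

namespace SimpleGraph

variable {V : Type*} {G : SimpleGraph V}

namespace Walk

def IsOddCycle {u : V} (c : G.Walk u u) : Prop :=
  c.IsCycle ∧ Odd c.length

theorem exists_isOddCycle_of_odd_length {u : V} (w : G.Walk u u) (hw : Odd w.length) :
    ∃ (v : V) (c : G.Walk v v), c.IsOddCycle := by
  induction hn : w.length using Nat.strong_induction_on generalizing u with
  | _ n ih =>
  cases w with
  | nil => simp at hw
  | @cons _ v _ h q =>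
    by_cases hq : q.IsPath
    · have hq₀ : q.length ≠ 0 := fun h₀ => h.ne (eq_of_length_eq_zero h₀).symm
      refine ⟨u, cons h q, isCycle_iff_isPath_tail_and_le_length.2 ⟨by simpa using hq, ?_⟩, hn ▸ hw⟩
      rw [length_cons] at hw ⊢
      grind
    -- a repeated vertex splits `cons h q` into two shorter closed walks, one of them odd
    · obtain ⟨x, c, ⟨a, b, rfl⟩, hc⟩ : ∃ (x : V) (c : G.Walk x x), c.IsSubwalk q ∧ ¬ c.Nil := by
        simpa using mt isPath_iff_isSubwalk_imp_nil.2 hq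
      rw [not_nil_iff_lt_length] at hc
      simp only [length_cons, length_append] at hw hn
      rcases Nat.even_or_odd c.length with hce | hco
      · exact ih _ (by simp only [length_cons, length_append]; omega) (cons h (a.append b))
          (by simp only [length_cons, length_append]; grind) rfl
      · exact ih _ (by omega) c hco rfl

theorem isCycle_cons_append {u v w : V} (h : G.Adj u v) {p : G.Walk v w} {q : G.Walk w u}
    (hp : p.IsPath) (hq : q.IsPath) (hwu : w ≠ u)
    (hpq : ∀ y ∈ p.support, y ∈ q.support → y = w) (hlen : 1 < p.length + q.length) :
    (cons h (p.append q)).IsCycle := by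
  have hup : u ∉ p.support := fun hu => hwu (hpq u hu q.end_mem_support).symm
  rw [← cons_append]
  refine (hp.cons hup).isCycle_append hq (fun y hyp hyq => ?_) (by simp only [length_cons]; omega)
  rw [support_cons, List.tail_cons] at hyp
  obtain rfl := hpq y hyp (List.mem_of_mem_tail hyq)
  have hnd := hq.support_nodup
  rw [← q.cons_tail_support, List.nodup_cons] at hnd
  exact hnd.1 hyq

theorem IsOddCycle.exists_isOddCycle_mem_edges_of_isPath {u v w : V} {c : G.Walk u u}
    (hc : c.IsOddCycle) (h : G.Adj u v) {p : G.Walk v w} (hp : p.IsPath)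
    (hw : w ∈ c.support) (hwu : w ≠ u) (hpc : ∀ y ∈ p.support, y ∈ c.support → y = w) :
    ∃ d : G.Walk u u, d.IsOddCycle ∧ s(u, v) ∈ d.edges := by
  classical
  obtain ⟨hcyc, hcodd⟩ := hc
  have close (q : G.Walk w u) (hq : q.IsPath) (hqc : q.support ⊆ c.support)
      (heven : Even (p.length + q.length)) :
      ∃ d : G.Walk u u, d.IsOddCycle ∧ s(u, v) ∈ d.edges := by
    have hq₀ : q.length ≠ 0 := fun h₀ => hwu (eq_of_length_eq_zero h₀)
    refine ⟨cons h (p.append q), ⟨isCycle_cons_append h hp hq hwu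
      (fun y hy hyq => hpc y hy (hqc hyq)) (by grind), ?_⟩, by simp⟩
    rw [length_cons, length_append]
    exact heven.add_one
  have hsplit := c.take_spec hw
  have hq₁ : (c.takeUntil w hw).IsPath := hcyc.isPath_takeUntil hw
  have hq₂ : (c.dropUntil w hw).IsPath := by
    rw [← hsplit] at hcyc
    exact hcyc.isPath_of_append_right (not_nil_of_ne hwu.symm)
  have hlen : (c.takeUntil w hw).length + (c.dropUntil w hw).length = c.length := by
    rw [← length_append, hsplit]
  rcases Nat.even_or_odd (p.length + (c.dropUntil w hw).length) with heven | hodd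
  · exact close _ hq₂ (c.support_dropUntil_subset_support hw) heven
  · refine close _ hq₁.reverse ?_ ?_
    · rw [support_reverse]
      exact fun y hy => c.support_takeUntil_subset_support hw (List.mem_reverse.1 hy)
    · rw [length_reverse]
      grind

end Walk

open Walk

theorem exists_isPath_notMem_support_of_connected_induce {u x y : V}
    (hconn : (G.induce {z | z ≠ u}).Connected) (hx : x ≠ u) (hy : y ≠ u) :
    ∃ p : G.Walk x y, p.IsPath ∧ u ∉ p.support := by
  classical
  obtain ⟨q⟩ := hconn.preconnected ⟨x, hx⟩ ⟨y, hy⟩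
  let q' := q.map (Embedding.induce _).toHom
  refine ⟨q'.bypass, q'.bypass_isPath, fun hu => ?_⟩
  have hu' := q'.support_bypass_subset_support hu
  rw [Walk.support_map, List.mem_map] at hu'
  obtain ⟨z, -, hz⟩ := hu'
  exact z.2 hz

theorem Walk.IsOddCycle.exists_isOddCycle_mem_edges_of_mem_support {u v x : V}
    {c : G.Walk x x} (hc : c.IsOddCycle) (hu : u ∈ c.support) (h : G.Adj u v)
    (hdel : (G.induce {y | y ≠ u}).Connected) :
    ∃ (b : V) (d : G.Walk b b), d.IsOddCycle ∧ s(u, v) ∈ d.edges := by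
  classical
  set c' := c.rotate u hu
  have hc' : c'.IsOddCycle := ⟨hc.1.rotate hu, by rw [length_rotate]; exact hc.2⟩
  obtain ⟨p, hp, hup⟩ :=
    exists_isPath_notMem_support_of_connected_induce hdel h.ne' (c'.adj_snd hc'.1.not_nil).ne'
  obtain ⟨w, hwc, hwp, hfirst⟩ := p.exists_mem_support_forall_mem_support_imp_eq
    c'.support.toFinset ⟨c'.snd, by simp [p.end_mem_support]⟩
  rw [List.mem_toFinset] at hwc
  exact ⟨u, hc'.exists_isOddCycle_mem_edges_of_isPath h (hp.takeUntil hwp) hwc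
    (fun hwu => hup (hwu ▸ hwp)) fun y hy hyc => hfirst y (List.mem_toFinset.2 hyc) hy⟩

theorem Walk.IsOddCycle.exists_isOddCycle_mem_support_of_reachable
    (hdel : ∀ v, (G.induce {x | x ≠ v}).Connected) {c z : V} {C : G.Walk c c}
    (hC : C.IsOddCycle) (hz : G.Reachable z c) :
    ∃ (d : V) (D : G.Walk d d), D.IsOddCycle ∧ z ∈ D.support := by
  obtain ⟨r⟩ := hz
  induction r with
  | nil => exact ⟨_, C, hC, C.start_mem_support⟩
  | cons h _ ih =>
    obtain ⟨d, D, hD, hz⟩ := ih hC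
    obtain ⟨b, D', hD', he⟩ := hD.exists_isOddCycle_mem_edges_of_mem_support hz h.symm (hdel _)
    exact ⟨b, D', hD', D'.snd_mem_support_of_mem_edges he⟩

end SimpleGraph

/-- In a 2-connected non-bipartite graph, every edge is contained in an odd
cycle. -/
theorem stmt_2 {V : Type*} [Fintype V] (G : SimpleGraph V) (hG : TwoConnected G)
    (hbip : ¬ G.Colorable 2) :
    ∀ e ∈ G.edgeSet, ∃ (b : V) (D : G.Walk b b),
      D.IsCycle ∧ Odd D.length ∧ e ∈ D.edges := by
  obtain ⟨-, hconn, hdel⟩ := hG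
  obtain ⟨a, W, hW⟩ : ∃ (a : V) (W : G.Walk a a), Odd W.length := by
    simpa [two_colorable_iff_forall_loop_even] using hbip
  obtain ⟨c, C, hC⟩ := W.exists_isOddCycle_of_odd_length hW
  rintro ⟨u, v⟩ huv
  obtain ⟨d, D, hD, hu⟩ := hC.exists_isOddCycle_mem_support_of_reachable hdel (hconn u c)
  obtain ⟨b, D', ⟨hcycle, hodd⟩, he⟩ :=
    hD.exists_isOddCycle_mem_edges_of_mem_support hu huv (hdel u)
  exact ⟨b, D', hcycle, hodd, he⟩
end

section
/- Let G be a 2-connected simple graph and let v be a vertex of G with degree at least 3. Then there exists a cycle of even length in G containing the vertex v. -/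
open SimpleGraph

/-!
The graph `G - v` is connected and contains at least three neighbours of `v`. In a connected
graph two of any three vertices receive the same colour in a 2-colouring of a spanning tree,
so the tree path between them has even length. Closing this path through `v` gives an even
cycle through `v`.
-/

open Finset

namespace SimpleGraph

variable {V : Type*} {G : SimpleGraph V}

theorem Connected.exists_isPath_even_length (hG : G.Connected) {s : Finset V} (hs : 2 < #s) :
    ∃ u ∈ s, ∃ w ∈ s, u ≠ w ∧ ∃ p : G.Walk u w, p.IsPath ∧ Even p.length := by
  classical
  obtain ⟨T, hTG, hT⟩ := hG.exists_isTree_le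
  obtain ⟨col⟩ := hT.colorable_two
  let c : T.Coloring Bool := T.recolorOfEquiv finTwoEquiv col
  obtain ⟨u, hu, w, hw, huw, hc⟩ := exists_ne_map_eq_of_card_lt_of_maps_to
    (t := univ) (by simpa using hs) (f := c) fun _ _ => mem_univ _
  obtain ⟨q⟩ := hT.connected.preconnected u w
  refine ⟨u, hu, w, hw, huw, q.bypass.mapLe hTG, q.bypass_isPath.mapLe hTG, ?_⟩
  rw [Walk.length_mapLe, c.even_length_iff_congr, hc]

theorem Walk.IsPath.isCycle_cons_cons {v a c : V} (hva : G.Adj v a) (hcv : G.Adj c v)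
    (hac : a ≠ c) {p : G.Walk a c} (hp : p.IsPath) (hv : v ∉ p.support) :
    (Walk.cons hcv (Walk.cons hva p)).IsCycle := by
  refine (Walk.cons_isCycle_iff _ _).mpr ⟨(Walk.cons_isPath_iff _ _).mpr ⟨hp, hv⟩, ?_⟩
  rw [Walk.edges_cons, List.mem_cons, Sym2.eq_iff, not_or]
  refine ⟨by rintro (⟨rfl, -⟩ | ⟨rfl, -⟩) <;> simp_all, fun h => hv ?_⟩
  exact p.snd_mem_support_of_mem_edges h

end SimpleGraph

/-- In a 2-connected graph, every vertex of degree at least 3 lies on an even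
cycle. -/
theorem stmt_5 {V : Type*} [Fintype V] (G : SimpleGraph V) [DecidableRel G.Adj]
    (hG : TwoConnected G) (v : V) (hdeg : 3 ≤ G.degree v) :
    ∃ (b : V) (D : G.Walk b b), D.IsCycle ∧ Even D.length ∧ v ∈ D.support := by
  classical
  have hN : 2 < #((G.neighborFinset v).subtype (· ≠ v)) := by
    rw [card_subtype, filter_true_of_mem fun x hx => ((G.mem_neighborFinset v x).mp hx).ne',
      card_neighborFinset_eq_degree]
    omega
  obtain ⟨u, hu, w, hw, huw, p, hp, heven⟩ := (hG.2.2 v).exists_isPath_even_length hN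
  rw [mem_subtype, mem_neighborFinset] at hu hw
  let ι := Embedding.induce (G := G) {x | x ≠ v}
  replace hu : G.Adj v (ι u) := hu
  replace hw : G.Adj (ι w) v := hw.symm
  have hvq : v ∉ (p.map ι.toHom).support := by
    rw [Walk.support_map, List.mem_map]
    rintro ⟨x, -, hx⟩
    exact x.2 hx
  refine ⟨ι w, .cons hw (.cons hu (p.map ι.toHom)), ?_, ?_, by simp⟩
  · exact (hp.map ι.injective).isCycle_cons_cons hu hw (ι.injective.ne huw) hvq
  · rw [Walk.length_cons, Walk.length_cons, Walk.length_map]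
    exact heven.add even_two
end

section
/- Let G be a 2-edge-connected simple graph and let v be a vertex of G whose degree is odd. Then the graph G − v (G with the vertex v deleted) has a connected component containing at least 3 neighbors of v. -/
/-!
Every neighbour `u` of `v` shares its component of `G - v` with a second neighbour: since `vu` is
not a bridge, a path from `v` to `u` avoiding the edge `vu` leaves `v` through another neighbour
`w` and then stays inside `G - v`. The `deg v` neighbours are distributed over the components of
`G - v`, so as `deg v` is odd some component receives an odd number of them; that number is
nonzero, hence at least two, hence at least three.
-/

open SimpleGraph

/-- A graph is 2-edge-connected if it is connected and remains connected after
the deletion of any single edge. -/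
def TwoEdgeConnected {V : Type*} (G : SimpleGraph V) : Prop :=
  G.Connected ∧ ∀ e ∈ G.edgeSet, (G.deleteEdges {e}).Connected

theorem Set.exists_odd_ncard_fiber {α β : Type*} [Finite α] (s : Set α) (f : α → β)
    (hs : Odd s.ncard) : ∃ b, Odd {a | a ∈ s ∧ f a = b}.ncard := by
  classical
  obtain ⟨t, rfl⟩ := s.toFinite.exists_finset_coe
  by_contra! h
  have hfiber (b : β) : Even {a ∈ t | f a = b}.card := by
    simpa [← Finset.coe_filter, Set.ncard_coe_finset] using h b
  rw [Set.ncard_coe_finset, Finset.card_eq_sum_card_image f t] at hs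
  exact Nat.not_even_iff_odd.mpr hs (Finset.even_sum _ fun b _ => hfiber b)

namespace SimpleGraph

variable {V : Type*} {G : SimpleGraph V}

theorem ncard_setOf_adj_subtype_ne [Fintype V] [DecidableRel G.Adj] (v : V) :
    {u : {x // x ≠ v} | G.Adj v u}.ncard = G.degree v := by
  have himage : Subtype.val '' {u : {x // x ≠ v} | G.Adj v u} = G.neighborSet v := by
    ext x
    exact ⟨fun ⟨u, hu, hux⟩ => hux ▸ hu, fun hx => ⟨⟨x, hx.ne'⟩, hx, rfl⟩⟩
  rw [← Set.ncard_image_of_injective _ Subtype.val_injective, himage,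
    Set.ncard_eq_toFinset_card', Set.toFinset_card, card_neighborSet_eq_degree]

theorem Walk.reachable_induce_of_forall_mem_support {s : Set V} {a b : V} (p : G.Walk a b)
    (hp : ∀ x ∈ p.support, x ∈ s) :
    (G.induce s).Reachable ⟨a, hp a p.start_mem_support⟩ ⟨b, hp b p.end_mem_support⟩ :=
  ⟨p.induce s hp⟩

theorem exists_adj_reachable_induce_ne_of_reachable_deleteEdges {v u : V} (hu : G.Adj v u)
    (h : (G.deleteEdges {s(v, u)}).Reachable v u) :
    ∃ w : {x // x ≠ v}, (w : V) ≠ u ∧ G.Adj v w ∧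
      (G.induce {x | x ≠ v}).Reachable w ⟨u, hu.ne'⟩ := by
  classical
  obtain ⟨p⟩ := h
  obtain ⟨p, hp⟩ := p.toPath
  obtain ⟨w, hvw, q, rfl⟩ := Walk.exists_eq_cons_of_ne hu.ne p
  obtain ⟨hvw, hvw_ne⟩ := deleteEdges_adj.mp hvw
  have hv_notMem : v ∉ q.support := (List.nodup_cons.mp hp.support_nodup).1
  have hq : ∀ x ∈ (q.mapLe (deleteEdges_le _)).support, x ∈ {x | x ≠ v} := by
    rw [Walk.support_mapLe_eq_support]
    exact fun x hx hxv => hv_notMem (hxv ▸ hx)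
  refine ⟨⟨w, hvw.ne'⟩, ?_, hvw, Walk.reachable_induce_of_forall_mem_support _ hq⟩
  rintro rfl
  exact hvw_ne rfl

theorem one_lt_ncard_setOf_adj_connectedComponentMk_eq [Finite V] {v : V} {u : {x // x ≠ v}}
    (hu : G.Adj v u) (h : (G.deleteEdges {s(v, u)}).Reachable v u) :
    1 < {w : {x // x ≠ v} | G.Adj v w ∧ (G.induce {x | x ≠ v}).connectedComponentMk w =
      (G.induce {x | x ≠ v}).connectedComponentMk u}.ncard := by
  obtain ⟨w, hwu, hw, hwu_reach⟩ := exists_adj_reachable_induce_ne_of_reachable_deleteEdges hu h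
  exact (Set.one_lt_ncard (Set.toFinite _)).mpr
    ⟨w, ⟨hw, ConnectedComponent.sound hwu_reach⟩, u, ⟨hu, rfl⟩, fun h => hwu (congrArg _ h)⟩

end SimpleGraph

/-- In a 2-edge-connected graph, if `v` has odd degree, then some connected
component of `G − v` contains at least 3 neighbors of `v`. -/
theorem stmt_7 {V : Type*} [Fintype V] (G : SimpleGraph V) [DecidableRel G.Adj]
    (hG : TwoEdgeConnected G) (v : V) (hdeg : Odd (G.degree v)) :
    ∃ c : (G.induce {x | x ≠ v}).ConnectedComponent,
      3 ≤ {u : {x : V // x ≠ v} | G.Adj v ↑u ∧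
        (G.induce {x | x ≠ v}).connectedComponentMk u = c}.ncard := by
  obtain ⟨c, hodd⟩ := Set.exists_odd_ncard_fiber {u : {x // x ≠ v} | G.Adj v u}
    (G.induce {x | x ≠ v}).connectedComponentMk (ncard_setOf_adj_subtype_ne (G := G) v ▸ hdeg)
  simp only [Set.mem_ofPred_eq] at hodd
  refine ⟨c, ?_⟩
  obtain ⟨u, hu, rfl⟩ := Set.nonempty_of_ncard_ne_zero hodd.pos.ne'
  have htwo := one_lt_ncard_setOf_adj_connectedComponentMk_eq hu ((hG.2 _ hu).preconnected v u)
  obtain ⟨k, hk⟩ := hodd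
  omega
end

section
/- Let G be a 2-edge-connected simple graph and let C be a cycle in G of odd length. Then every edge e of G that does not lie on C is contained in a circuit of even length. -/
/-!
Write `e = uv`. Since no edge is a bridge, the vertices lying on some trail from `v` to `u` that
avoids `uv` form a set closed under adjacency: a neighbour `w'` of such a trail is spliced in by
a detour through `w'` and a path back to the trail in `G - ww'`. By connectivity there is such a
trail `T` through a vertex of `C`. Cutting `T` at its first and last vertices `x`, `y` on `C` and
replacing the middle part by one of the two arcs of `C` between `x` and `y` keeps `uv + T` a
circuit, and since `C` is odd the two arcs have lengths of different parity, so one choice makes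
the circuit even.
-/

open SimpleGraph

namespace SimpleGraph.Walk

variable {V : Type*} {G : SimpleGraph V} {a b x y : V}

theorem disjoint_edges_of_forall_mem_support {c d : V} (p : G.Walk a b) (q : G.Walk c d)
    (h : ∀ z ∈ p.support, z ∈ q.support → z = x) : p.edges.Disjoint q.edges := by
  intro g hgp hgq
  induction g using Sym2.ind with
  | _ z₁ z₂ =>
    have h₁ := h z₁ (p.fst_mem_support_of_mem_edges hgp) (q.fst_mem_support_of_mem_edges hgq)
    have h₂ := h z₂ (p.snd_mem_support_of_mem_edges hgp) (q.snd_mem_support_of_mem_edges hgq)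
    exact (p.adj_of_mem_edges hgp).ne (h₁.trans h₂.symm)

theorem exists_append_of_exists_mem_support (p : G.Walk a b) (S : Set V)
    (h : ∃ z ∈ p.support, z ∈ S) :
    ∃ x ∈ S, ∃ (q : G.Walk a x) (r : G.Walk x b),
      p = q.append r ∧ ∀ z ∈ q.support, z ∈ S → z = x := by
  induction p with
  | nil =>
    obtain ⟨z, hz, hzS⟩ := h
    rw [support_nil, List.mem_singleton] at hz
    subst hz
    exact ⟨z, hzS, nil, nil, rfl, by simp⟩
  | @cons u w b hadj p ih =>
    by_cases hu : u ∈ S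
    · exact ⟨u, hu, nil, cons hadj p, rfl, by simp⟩
    · obtain ⟨x, hx, q, r, rfl, hq⟩ := ih (by simpa [hu] using h)
      refine ⟨x, hx, cons hadj q, r, rfl, ?_⟩
      simp only [support_cons, List.mem_cons, forall_eq_or_imp]
      exact ⟨fun hu' => absurd hu' hu, hq⟩

theorem exists_append_append_of_exists_mem_support (p : G.Walk a b) (S : Set V)
    (h : ∃ z ∈ p.support, z ∈ S) :
    ∃ x ∈ S, ∃ y ∈ S, ∃ (q : G.Walk a x) (m : G.Walk x y) (r : G.Walk y b),
      p = q.append (m.append r) ∧ (∀ z ∈ q.support, z ∈ S → z = x) ∧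
        ∀ z ∈ r.support, z ∈ S → z = y := by
  obtain ⟨x, hx, q, p', rfl, hq⟩ := p.exists_append_of_exists_mem_support S h
  obtain ⟨y, hy, r, m, hp', hr⟩ := p'.reverse.exists_append_of_exists_mem_support S
    ⟨x, p'.reverse.end_mem_support, hx⟩
  refine ⟨x, hx, y, hy, q, m.reverse, r.reverse, ?_, hq, fun z hz => hr z (by simpa using hz)⟩
  rw [← reverse_append, ← hp', reverse_reverse]

theorem exists_append_append_of_mem_support (p : G.Walk a b) (hx : x ∈ p.support)
    (hy : y ∈ p.support) :
    (∃ (q : G.Walk a x) (m : G.Walk x y) (r : G.Walk y b), p = q.append (m.append r)) ∨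
      ∃ (q : G.Walk a y) (m : G.Walk y x) (r : G.Walk x b), p = q.append (m.append r) := by
  obtain ⟨q, r, rfl⟩ := mem_support_iff_exists_append.1 hx
  rcases (mem_support_append_iff _ _).1 hy with hy | hy
  · obtain ⟨q₁, q₂, rfl⟩ := mem_support_iff_exists_append.1 hy
    exact .inr ⟨q₁, q₂, r, (append_assoc ..).symm⟩
  · obtain ⟨r₁, r₂, rfl⟩ := mem_support_iff_exists_append.1 hy
    exact .inl ⟨q, r₁, r₂, rfl⟩

theorem IsTrail.append_replace {p : G.Walk a x} {m m' : G.Walk x y} {r : G.Walk y b}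
    (h : (p.append (m.append r)).IsTrail) (hm' : m'.IsTrail) (hp : m'.edges.Disjoint p.edges)
    (hr : m'.edges.Disjoint r.edges) : (p.append (m'.append r)).IsTrail := by
  have hpr : (p.edges ++ r.edges).Nodup := by
    refine List.Nodup.sublist ?_ h.edges_nodup
    simp [edges_append]
  rw [isTrail_def, edges_append, edges_append, List.nodup_append_comm, List.append_assoc]
  exact hm'.edges_nodup.append (List.nodup_append_comm.1 hpr)
    (List.disjoint_append_right.2 ⟨hr, hp⟩)


theorem IsTrail.exists_isTrail_even_length_add [DecidableEq V] {c : G.Walk a a}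
    (hc : c.IsTrail) (hodd : Odd c.length) (hx : x ∈ c.support) (hy : y ∈ c.support) (k : ℕ) :
    ∃ q : G.Walk x y, q.IsTrail ∧ q.edges ⊆ c.edges ∧ Even (q.length + k) := by
  obtain ⟨q, r, hqr⟩ := mem_support_iff_exists_append.1 ((mem_support_rotate_iff c x hx).2 hy)
  have htrail : (q.append r).IsTrail := hqr ▸ (isTrail_rotate hx).2 hc
  have hsub : (q.append r).edges ⊆ c.edges := fun g hg =>
    (rotate_edges c x hx).mem_iff.1 (hqr ▸ hg)
  have hlen : q.length + r.length = c.length := by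
    rw [← length_append, ← hqr, length_rotate]
  by_cases hq : Even (q.length + k)
  · exact ⟨q, htrail.of_append_left, fun g hg => hsub (by simp [edges_append, hg]), hq⟩
  · refine ⟨r.reverse, htrail.of_append_right.reverse, fun g hg => hsub ?_, ?_⟩
    · simp_all [edges_append]
    · rw [Nat.not_even_iff_odd] at hq
      rw [length_reverse]
      grind

theorem exists_isPath_not_mem_edges {v w v' w' : V}
    (h : (G.deleteEdges {s(v, w)}).Reachable v' w') :
    ∃ p : G.Walk v' w', p.IsPath ∧ s(v, w) ∉ p.edges := by
  classical
  obtain ⟨p, hp⟩ := reachable_deleteEdges_iff_exists_walk.1 h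
  exact ⟨p.bypass, p.bypass_isPath, fun he => hp (p.edges_bypass_subset_edges he)⟩

end SimpleGraph.Walk

namespace TwoEdgeConnected

open SimpleGraph.Walk

variable {V : Type*} {G : SimpleGraph V} {u v w w' : V}

theorem exists_trail_cons_mem_support_of_adj (hG : TwoEdgeConnected G) (h : G.Adj u v)
    {T : G.Walk v u} (hT : (Walk.cons h T).IsTrail) (hw : w ∈ T.support) (hww' : G.Adj w w') :
    ∃ T' : G.Walk v u, (Walk.cons h T').IsTrail ∧ w' ∈ T'.support := by
  by_cases hw'T : w' ∈ T.support
  · exact ⟨T, hT, hw'T⟩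
  have hsupp : ∀ z, z ∈ (Walk.cons h T).support → z ∈ T.support := by
    simp only [support_cons, List.mem_cons, forall_eq_or_imp]
    exact ⟨T.end_mem_support, fun _ => id⟩
  obtain ⟨Q, hQ, hQe⟩ := exists_isPath_not_mem_edges ((hG.2 _ hww').preconnected w' v)
  obtain ⟨t, ht, Q₁, Q₂, rfl, hQ₁⟩ := Q.exists_append_of_exists_mem_support {z | z ∈ T.support}
    ⟨v, Q.end_mem_support, T.start_mem_support⟩
  set R : G.Walk w t := Walk.cons hww' Q₁
  have hR : R.IsTrail := (isTrail_cons _ _).2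
    ⟨hQ.of_append_left.isTrail, fun he => hQe (by simp [edges_append, he])⟩
  have hRT : R.edges.Disjoint (Walk.cons h T).edges := by
    rw [edges_cons, List.disjoint_cons_left]
    exact ⟨fun he => hw'T (hsupp _ ((Walk.cons h T).snd_mem_support_of_mem_edges he)),
      Q₁.disjoint_edges_of_forall_mem_support _ fun z hz hzT => hQ₁ z hz (hsupp z hzT)⟩
  have splice : ∀ {x y : V} (p : G.Walk v x) (m R' : G.Walk x y) (r : G.Walk y u),
      T = p.append (m.append r) → R'.IsTrail → R'.edges.Disjoint (Walk.cons h T).edges →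
      w' ∈ R'.support → ∃ T' : G.Walk v u, (Walk.cons h T').IsTrail ∧ w' ∈ T'.support := by
    rintro x y p m R' r rfl hR' hR'T hw'
    rw [← cons_append] at hT hR'T
    simp only [edges_append, List.disjoint_append_right] at hR'T
    refine ⟨p.append (R'.append r), ?_, by simp [hw']⟩
    rw [← cons_append]
    exact hT.append_replace hR' hR'T.1 hR'T.2.2
  rcases T.exists_append_append_of_mem_support hw ht with ⟨p, m, r, hpmr⟩ | ⟨p, m, r, hpmr⟩
  · exact splice p m R r hpmr hR hRT (by simp [R])
  · exact splice p m R.reverse r hpmr hR.reverse (by simpa using hRT) (by simp [R])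

theorem exists_trail_cons_mem_support (hG : TwoEdgeConnected G) (h : G.Adj u v) (c : V) :
    ∃ T : G.Walk v u, (Walk.cons h T).IsTrail ∧ c ∈ T.support := by
  induction (reachable_iff_reflTransGen u c).1 (hG.1.preconnected u c) with
  | refl =>
    obtain ⟨T, hT, he⟩ := exists_isPath_not_mem_edges ((hG.2 _ h).preconnected v u)
    exact ⟨T, (isTrail_cons _ _).2 ⟨hT.isTrail, he⟩, T.end_mem_support⟩
  | tail _ hadj ih =>
    obtain ⟨T, hT, hw⟩ := ih
    exact hG.exists_trail_cons_mem_support_of_adj h hT hw hadj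

end TwoEdgeConnected

theorem stmt_8_general {V : Type*} (G : SimpleGraph V) (hG : TwoEdgeConnected G)
    {a : V} (C : G.Walk a a) (hC : C.IsCycle) (hCodd : Odd C.length)
    (e : Sym2 V) (he : e ∈ G.edgeSet) (heC : e ∉ C.edges) :
    ∃ (b : V) (D : G.Walk b b), D.IsCircuit ∧ Even D.length ∧ e ∈ D.edges := by
  classical
  induction e using Sym2.ind with | _ u v => ?_
  have huv : G.Adj u v := he
  obtain ⟨T, hT, haT⟩ := hG.exists_trail_cons_mem_support huv a
  obtain ⟨x, hx, y, hy, A, M, B, rfl, hA, hB⟩ :=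
    T.exists_append_append_of_exists_mem_support {z | z ∈ C.support}
      ⟨a, haT, C.start_mem_support⟩
  obtain ⟨arc, harc, harcC, hpar⟩ := hC.isCircuit.isTrail.exists_isTrail_even_length_add hCodd
    hx hy (A.length + B.length + 1)
  have hAC := A.disjoint_edges_of_forall_mem_support C hA
  have hBC := B.disjoint_edges_of_forall_mem_support C hB
  refine ⟨u, Walk.cons huv (A.append (arc.append B)), ⟨?_, by simp⟩, ?_, by simp⟩
  · rw [← Walk.cons_append] at hT ⊢
    refine hT.append_replace harc ?_ fun g hg hgB => hBC hgB (harcC hg)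
    rw [Walk.edges_cons, List.disjoint_cons_right]
    exact ⟨fun h => heC (harcC h), fun g hg hgA => hAC hgA (harcC hg)⟩
  · simp only [Walk.length_cons, Walk.length_append]
    convert hpar using 1
    lia

/-- In a 2-edge-connected graph, every edge not lying on a given odd cycle is
contained in an even circuit (closed trail). -/
theorem stmt_8 {V : Type*} [Fintype V] (G : SimpleGraph V) (hG : TwoEdgeConnected G)
    {a : V} (C : G.Walk a a) (hC : C.IsCycle) (hCodd : Odd C.length)
    (e : Sym2 V) (he : e ∈ G.edgeSet) (heC : e ∉ C.edges) :
    ∃ (b : V) (D : G.Walk b b), D.IsCircuit ∧ Even D.length ∧ e ∈ D.edges :=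
  stmt_8_general G hG C hC hCodd e he heC
end

section
/- Let G be a 2-edge-connected simple graph and let k ≥ 3 be a positive integer. If the degree of every vertex of G is divisible by k, then every edge of G is contained in a circuit of even length. -/
/-!
Put `H = G - xy`; an even circuit through `xy` is `xy` followed by an odd `x`–`y` trail of `H`.
In `H` all degrees are divisible by `k` except at `x` and `y`, which are `-1` mod `k`, and, `G`
being 2-edge-connected, every bridge of `H` separates `x` from `y`. Such a graph with endpoints
`a`, `b` has an odd `a`–`b` trail, by induction on the graph:
* a bridge `uv` splits it into two smaller instances, with endpoints `a, u` and `v, b`, and two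
  odd trails joined by `uv` form an odd trail;
* if there is no bridge but an odd cycle, bridgelessness reroutes an odd closed trail through
  every vertex, in particular through `a`, and one of its two arcs towards the `b`-path is odd;
* without odd cycles, parity of walks from `a` is well defined and both parity classes have the
  same degree sum. If `b` were even, these sums would be `-2` and `0` mod `k`, so `k ∣ 2`.
-/

open SimpleGraph

namespace SimpleGraph

variable {V : Type*} {G : SimpleGraph V}

namespace Walk

theorem exists_prefix_edges_disjoint {z z' : V} (W : G.Walk z z') {x y : V} (p : G.Walk x y)
    (hy : y ∈ W.support) :
    ∃ c ∈ W.support, ∃ q : G.Walk x c, q.edges.Sublist p.edges ∧ ∀ e ∈ q.edges, e ∉ W.edges := by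
  induction p with
  | nil => exact ⟨_, hy, nil, by simp, by simp⟩
  | @cons x x' y h p ih =>
    by_cases hx : x ∈ W.support
    · exact ⟨x, hx, nil, by simp, by simp⟩
    obtain ⟨c, hc, q, hsub, hdisj⟩ := ih hy
    refine ⟨c, hc, cons h q, hsub.cons_cons _, ?_⟩
    simp only [edges_cons, List.mem_cons, forall_eq_or_imp]
    exact ⟨fun he => hx (W.fst_mem_support_of_mem_edges he), hdisj⟩

theorem exists_isPath_even_add_or_exists_odd_cycle {u v : V} (p : G.Walk u v) :
    (∃ q : G.Walk u v, q.IsPath ∧ Even (q.length + p.length)) ∨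
      ∃ z, G.Reachable u z ∧ ∃ C : G.Walk z z, C.IsCycle ∧ Odd C.length := by
  induction p with
  | nil => exact Or.inl ⟨nil, .nil, by simp⟩
  | @cons u w v h p ih =>
    rcases ih with ⟨q, hq, hpar⟩ | ⟨z, hz, C, hC, hodd⟩
    swap
    · exact Or.inr ⟨z, h.reachable.trans hz, C, hC, hodd⟩
    by_cases hu : u ∈ q.support
    swap
    · exact Or.inl ⟨cons h q, hq.cons hu, by rw [length_cons, length_cons]; grind⟩
    -- the loop `cons h q₁` is either an odd cycle or even, and then cutting it keeps the parity
    obtain ⟨q₁, q₂, rfl⟩ := mem_support_iff_exists_append.mp hu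
    rw [length_append] at hpar
    rcases Nat.even_or_odd q₁.length with h₁ | h₁
    · refine Or.inr ⟨u, .refl u, cons h q₁, (cons_isCycle_iff q₁ h).mpr ⟨hq.of_append_left, ?_⟩, ?_⟩
      · intro he
        have := hq.of_append_left.length_eq_one_of_mem_edges (Sym2.eq_swap ▸ he)
        simp [this] at h₁
      · simpa [Nat.odd_add_one] using h₁
    · exact Or.inl ⟨q₂, hq.of_append_right, by
        rw [length_cons]; grind⟩

theorem IsTrail.exists_subtrail_even_add [DecidableEq V] {z u c : V} {D : G.Walk z z}
    (hD : D.IsTrail) (hodd : Odd D.length) (hu : u ∈ D.support) (hc : c ∈ D.support) (n : ℕ) :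
    ∃ A : G.Walk u c, A.IsTrail ∧ A.edges ⊆ D.edges ∧ Even (A.length + n) := by
  have hrot := hD.rotate hu
  have hsub : (D.rotate u hu).edges ⊆ D.edges := (D.rotate_edges u hu).perm.subset
  have hlen := D.length_rotate u hu
  obtain ⟨q, r, hqr⟩ := mem_support_iff_exists_append.mp ((D.mem_support_rotate_iff u hu).mpr hc)
  rw [hqr] at hrot hsub hlen
  rw [edges_append, List.append_subset] at hsub
  rw [length_append] at hlen
  rcases Nat.even_or_odd (q.length + n) with hq | hq
  · exact ⟨q, hrot.of_append_left, hsub.1, hq⟩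
  · refine ⟨r.reverse, hrot.of_append_right.reverse, by simpa using hsub.2, ?_⟩
    rw [length_reverse]; grind

theorem IsTrail.exists_trail_even_add [DecidableEq V] {z u x y : V} {D : G.Walk z z}
    (hD : D.IsTrail) (hodd : Odd D.length) (hu : u ∈ D.support) {P : G.Walk x y} (hP : P.IsTrail)
    (hy : y ∈ D.support) (n : ℕ) :
    ∃ T : G.Walk u x, T.IsTrail ∧ Even (T.length + n) ∧
      ∀ e ∈ T.edges, e ∈ D.edges ∨ e ∈ P.edges := by
  obtain ⟨c, hc, q, hqP, hqD⟩ := D.exists_prefix_edges_disjoint P hy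
  obtain ⟨A, hA, hAD, hpar⟩ := hD.exists_subtrail_even_add hodd hu hc (q.length + n)
  refine ⟨A.append q.reverse, ?_, by simpa [add_assoc] using hpar, ?_⟩
  · rw [isTrail_def, edges_append, edges_reverse]
    exact hA.edges_nodup.append (List.nodup_reverse.mpr (hP.edges_nodup.sublist hqP))
      fun e he he' => hqD e (List.mem_reverse.mp he') (hAD he)
  · simp only [edges_append, edges_reverse, List.mem_append, List.mem_reverse]
    rintro e (he | he)
    · exact Or.inl (hAD he)
    · exact Or.inr (hqP.subset he)

end Walk

theorem deleteEdges_singleton_lt {u v : V} (huv : G.Adj u v) : G.deleteEdges {s(u, v)} < G :=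
  (deleteEdges_le _).lt_of_ne fun heq => by
    rw [← heq] at huv
    simp at huv

theorem Reachable.deleteEdges_of_not_reachable {x y p q : V} (hxy : G.Reachable x y)
    (hxp : ¬G.Reachable x p) : (G.deleteEdges {s(p, q)}).Reachable x y := by
  classical
  obtain ⟨w⟩ := hxy
  exact reachable_deleteEdges_iff_exists_walk.mpr
    ⟨w, fun he => hxp ⟨w.takeUntil p (w.fst_mem_support_of_mem_edges he)⟩⟩

theorem Reachable.deleteEdges_or {a u v : V} (h : G.Reachable a u) :
    (G.deleteEdges {s(u, v)}).Reachable a u ∨ (G.deleteEdges {s(u, v)}).Reachable a v := by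
  classical
  obtain ⟨p⟩ := h
  by_cases he : s(u, v) ∈ p.bypass.edges
  · have hv := p.bypass.snd_mem_support_of_mem_edges he
    refine Or.inr (reachable_deleteEdges_iff_exists_walk.mpr
      ⟨p.bypass.takeUntil v hv, fun he' => ?_⟩)
    exact Walk.endpoint_notMem_support_takeUntil p.bypass_isPath hv
      (p.bypass.adj_of_mem_edges he).ne (Walk.fst_mem_support_of_mem_edges _ he')
  · exact Or.inl (reachable_deleteEdges_iff_exists_walk.mpr ⟨p.bypass, he⟩)

theorem isBridge_of_isBridge_deleteEdges {e f : Sym2 V} (hf : G.IsBridge f)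
    (he : (G.deleteEdges {f}).IsBridge e) (heG : e ∈ (G.deleteEdges {f}).edgeSet) :
    G.IsBridge e := by
  rw [isBridge_iff_forall_cycle_notMem (edgeSet_mono (deleteEdges_le _) heG)]
  intro u c hc hec
  have hcf : ∀ e' ∈ c.edges, e' ∉ ({f} : Set (Sym2 V)) := by
    rintro e' he' rfl
    exact hf.notMem_edges_of_isCycle hc he'
  exact (isBridge_iff_forall_cycle_notMem heG).mp he _ (hc.toDeleteEdges _ _ hcf)
    (by simpa using hec)

theorem degree_deleteEdges_add [Fintype V] [DecidableEq V] [DecidableRel G.Adj] {u v : V}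
    (huv : G.Adj u v) (w : V) :
    (G.deleteEdges {s(u, v)}).degree w + (if w = u then 1 else 0) + (if w = v then 1 else 0) =
      G.degree w := by
  simp only [← card_neighborFinset_eq_degree]
  by_cases hwu : w = u
  · subst hwu
    have : (G.deleteEdges {s(w, v)}).neighborFinset w = (G.neighborFinset w).erase v := by
      ext x; have := huv.ne; simp; tauto
    rw [this, if_pos rfl, if_neg huv.ne, add_zero,
      Finset.card_erase_add_one ((mem_neighborFinset _ _ _).mpr huv)]
  by_cases hwv : w = v
  · subst hwv
    have : (G.deleteEdges {s(u, w)}).neighborFinset w = (G.neighborFinset w).erase u := by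
      ext x; simp; tauto
    rw [this, if_neg hwu, if_pos rfl, add_zero,
      Finset.card_erase_add_one ((mem_neighborFinset _ _ _).mpr huv.symm)]
  · have : (G.deleteEdges {s(u, v)}).neighborFinset w = G.neighborFinset w := by
      ext x; simp; tauto
    rw [this, if_neg hwu, if_neg hwv, add_zero, add_zero]

theorem sum_degrees_eq_of_forall_adj_mem [Fintype V] [DecidableRel G.Adj] {s t : Finset V}
    (hs : ∀ v ∈ s, ∀ w, G.Adj v w → w ∈ t) (ht : ∀ w ∈ t, ∀ v, G.Adj v w → v ∈ s) :
    ∑ v ∈ s, G.degree v = ∑ w ∈ t, G.degree w := by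
  classical
  have hs' : ∀ v ∈ s, G.degree v = (Finset.bipartiteAbove G.Adj t v).card := by
    intro v hv
    rw [← card_neighborFinset_eq_degree]
    congr 1; ext w
    simpa [Finset.bipartiteAbove] using fun h => hs v hv w h
  have ht' : ∀ w ∈ t, G.degree w = (Finset.bipartiteBelow G.Adj s w).card := by
    intro w hw
    rw [← card_neighborFinset_eq_degree]
    congr 1; ext v
    simpa [Finset.bipartiteBelow, adj_comm] using fun h => ht w hw v h.symm
  rw [Finset.sum_congr rfl hs', Finset.sum_congr rfl ht']
  exact Finset.sum_card_bipartiteAbove_eq_sum_card_bipartiteBelow _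

open scoped Classical in
theorem sum_degrees_even_walks_eq_sum_degrees_odd_walks [Fintype V] [DecidableRel G.Adj] (a : V) :
    ∑ v ∈ Finset.univ.filter (fun v => ∃ p : G.Walk a v, Even p.length), G.degree v =
      ∑ v ∈ Finset.univ.filter (fun v => ∃ p : G.Walk a v, Odd p.length), G.degree v := by
  refine sum_degrees_eq_of_forall_adj_mem ?_ ?_ <;>
    simp only [Finset.mem_filter, Finset.mem_univ, true_and]
  · rintro v ⟨p, hp⟩ w hvw
    exact ⟨p.concat hvw, by simpa [Walk.length_concat, Nat.odd_add_one] using hp⟩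
  · rintro w ⟨p, hp⟩ v hvw
    exact ⟨p.concat hvw.symm, by simpa [Walk.length_concat, Nat.even_add_one] using hp⟩

theorem exists_odd_closed_trail_of_reachable [DecidableEq V] {z : V}
    (hbl : ∀ u v, G.Reachable z u → G.Adj u v → (G.deleteEdges {s(u, v)}).Reachable u v)
    {C : G.Walk z z} (hC : C.IsTrail) (hodd : Odd C.length) {x : V} (hx : G.Reachable x z) :
    ∃ D : G.Walk x x, D.IsTrail ∧ Odd D.length := by
  obtain ⟨p⟩ := hx
  induction p with
  | nil => exact ⟨C, hC, hodd⟩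
  | @cons x w z h p ih =>
    obtain ⟨D, hD, hDodd⟩ := ih hbl hC hodd
    by_cases hxD : x ∈ D.support
    · exact ⟨D.rotate x hxD, hD.rotate hxD, by rwa [Walk.length_rotate]⟩
    obtain ⟨P, hP⟩ :=
      reachable_deleteEdges_iff_exists_walk.mp (hbl x w ⟨(Walk.cons h p).reverse⟩ h)
    obtain ⟨T, hT, hTeven, hTedges⟩ := hD.exists_trail_even_add hDodd D.start_mem_support
      P.bypass_isPath.isTrail D.start_mem_support 0
    refine ⟨.cons h T, (Walk.isTrail_cons h T).mpr ⟨hT, fun he => ?_⟩, ?_⟩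
    · rcases hTedges _ he with he | he
      · exact hxD (D.fst_mem_support_of_mem_edges he)
      · exact hP (P.edges_bypass_subset_edges he)
    · simpa [Nat.odd_add_one] using hTeven

theorem exists_odd_trail_of_bridgeless [DecidableEq V] {a b z : V}
    (hbl : ∀ u v, G.Reachable a u → G.Adj u v → (G.deleteEdges {s(u, v)}).Reachable u v)
    {C : G.Walk z z} (hC : C.IsTrail) (hodd : Odd C.length) (hz : G.Reachable a z)
    (hab : G.Reachable a b) : ∃ T : G.Walk a b, T.IsTrail ∧ Odd T.length := by
  obtain ⟨D, hD, hDodd⟩ := exists_odd_closed_trail_of_reachable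
    (fun u v hu => hbl u v (hz.trans hu)) hC hodd hz
  obtain ⟨P⟩ := hab.symm
  obtain ⟨T, hT, hTeven, -⟩ := hD.exists_trail_even_add hDodd D.start_mem_support
    P.bypass_isPath.isTrail D.start_mem_support 1
  exact ⟨T, hT, by simpa [Nat.even_add_one] using hTeven⟩

section DivisibleChain

variable [Fintype V] [DecidableEq V] {k : ℕ} {a b u v : V}

/-- The degree condition asks that `G` plus an extra edge `ab` (a loop counting twice if `a = b`)
have all degrees divisible by `k` on the component of `a`; the bridge condition makes that
component a chain of bridgeless blocks from `a` to `b`. -/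
structure IsDivisibleChain (k : ℕ) (G : SimpleGraph V) [DecidableRel G.Adj] (a b : V) : Prop where
  reachable : G.Reachable a b
  dvd_degree : ∀ v, G.Reachable a v →
    k ∣ G.degree v + (if v = a then 1 else 0) + (if v = b then 1 else 0)
  not_reachable_of_isBridge : ∀ u v, G.Reachable a u → G.Adj u v → G.IsBridge s(u, v) →
    ¬(G.deleteEdges {s(u, v)}).Reachable a b

variable [DecidableRel G.Adj]

theorem IsDivisibleChain.symm (h : IsDivisibleChain k G a b) : IsDivisibleChain k G b a where
  reachable := h.reachable.symm
  dvd_degree w hw := by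
    simpa only [add_right_comm] using h.dvd_degree w (h.reachable.trans hw)
  not_reachable_of_isBridge p q hp hpq hb hba :=
    h.not_reachable_of_isBridge p q (h.reachable.trans hp) hpq hb hba.symm

theorem IsDivisibleChain.deleteEdges_isBridge (h : IsDivisibleChain k G a b) (huv : G.Adj u v)
    (hb : G.IsBridge s(u, v)) (hau : (G.deleteEdges {s(u, v)}).Reachable a u)
    (hbv : (G.deleteEdges {s(u, v)}).Reachable b v)
    (hab : ¬(G.deleteEdges {s(u, v)}).Reachable a b) :
    IsDivisibleChain k (G.deleteEdges {s(u, v)}) a u where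
  reachable := hau
  dvd_degree w hw := by
    have hwv : w ≠ v := by rintro rfl; exact hab (hw.trans hbv.symm)
    have hwb : w ≠ b := by rintro rfl; exact hab hw
    have := h.dvd_degree w (hw.mono (deleteEdges_le _))
    rw [← degree_deleteEdges_add huv w, if_neg hwv, if_neg hwb] at this
    simpa only [add_zero, add_right_comm] using this
  not_reachable_of_isBridge p q hp hpq hbpq hau' := by
    refine h.not_reachable_of_isBridge p q (hp.mono (deleteEdges_le _)) (deleteEdges_le _ hpq)
      (isBridge_of_isBridge_deleteEdges hb hbpq hpq) ?_
    have hle : (G.deleteEdges {s(u, v)}).deleteEdges {s(p, q)} ≤ G.deleteEdges {s(p, q)} :=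
      deleteEdges_mono (deleteEdges_le _)
    have hbp : ¬(G.deleteEdges {s(u, v)}).Reachable b p := fun hbp => hab (hp.trans hbp.symm)
    have huv' : (G.deleteEdges {s(p, q)}).Adj u v := by
      rw [deleteEdges_adj]
      exact ⟨huv, fun he => (deleteEdges_adj.mp hpq).2 (Set.mem_singleton_iff.mp he).symm⟩
    exact (hau'.mono hle).trans (huv'.reachable.trans
      ((hbv.deleteEdges_of_not_reachable hbp).symm.mono hle))

theorem IsDivisibleChain.exists_odd_trail_of_isBridge (h : IsDivisibleChain k G a b)
    (hu : G.Reachable a u) (huv : G.Adj u v) (hb : G.IsBridge s(u, v))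
    (ih : ∀ x y, IsDivisibleChain k (G.deleteEdges {s(u, v)}) x y →
      ∃ T : (G.deleteEdges {s(u, v)}).Walk x y, T.IsTrail ∧ Odd T.length) :
    ∃ T : G.Walk a b, T.IsTrail ∧ Odd T.length := by
  wlog hau : (G.deleteEdges {s(u, v)}).Reachable a u generalizing u v
  · rw [Sym2.eq_swap] at hb ih
    exact this (hu.trans huv.reachable) huv.symm hb ih
      (by rw [Sym2.eq_swap]; exact hu.deleteEdges_or.resolve_left hau)
  have hab := h.not_reachable_of_isBridge u v hu huv hb
  have hbv : (G.deleteEdges {s(u, v)}).Reachable b v :=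
    (h.reachable.symm.trans hu).deleteEdges_or.resolve_left fun hbu => hab (hau.trans hbu.symm)
  obtain ⟨T₁, hT₁, hT₁odd⟩ := ih a u (h.deleteEdges_isBridge huv hb hau hbv hab)
  have hchain₂ := h.symm.deleteEdges_isBridge huv.symm (Sym2.eq_swap ▸ hb)
    (Sym2.eq_swap ▸ hbv) (Sym2.eq_swap ▸ hau) (Sym2.eq_swap ▸ fun hba => hab hba.symm)
  rw [Sym2.eq_swap] at hchain₂
  obtain ⟨T₂, hT₂, hT₂odd⟩ := ih b v hchain₂
  have hle := deleteEdges_le (G := G) {s(u, v)}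
  have huv_notMem : ∀ {x y} (W : (G.deleteEdges {s(u, v)}).Walk x y), s(u, v) ∉ W.edges :=
    fun W he => by simpa [edgeSet_deleteEdges] using W.edges_subset_edgeSet he
  have hsupp : ∀ x ∈ T₁.support, x ∉ T₂.support := fun x hx₁ hx₂ =>
    hab (Reachable.trans ⟨T₁.takeUntil x hx₁⟩ (Reachable.symm ⟨T₂.takeUntil x hx₂⟩))
  refine ⟨(T₁.mapLe hle).append (.cons huv (T₂.reverse.mapLe hle)), ?_, ?_⟩
  · rw [Walk.isTrail_def, Walk.edges_append, Walk.edges_cons, Walk.edges_mapLe_eq_edges,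
      Walk.edges_mapLe_eq_edges, Walk.edges_reverse]
    refine hT₁.edges_nodup.append (List.nodup_cons.mpr ⟨by simpa using huv_notMem T₂,
      List.nodup_reverse.mpr hT₂.edges_nodup⟩) fun e he₁ he₂ => ?_
    rcases List.mem_cons.mp he₂ with rfl | he₂
    · exact huv_notMem T₁ he₁
    induction e with
    | h x y =>
      exact hsupp x (T₁.fst_mem_support_of_mem_edges he₁)
        (T₂.fst_mem_support_of_mem_edges (List.mem_reverse.mp he₂))
  · simp only [Walk.length_append, Walk.length_cons, Walk.length_mapLe, Walk.length_reverse]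
    grind

theorem IsDivisibleChain.exists_odd_trail_of_forall_not_odd_cycle (hk : ¬k ∣ 2)
    (h : IsDivisibleChain k G a b)
    (hcyc : ∀ z, G.Reachable a z → ∀ C : G.Walk z z, C.IsCycle → ¬Odd C.length) :
    ∃ T : G.Walk a b, T.IsTrail ∧ Odd T.length := by
  have hpath : ∀ {v} (p : G.Walk a v), ∃ q : G.Walk a v, q.IsPath ∧ Even (q.length + p.length) :=
    fun p => p.exists_isPath_even_add_or_exists_odd_cycle.resolve_right
      fun ⟨z, hz, C, hC, hodd⟩ => hcyc z hz C hC hodd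
  by_cases hb : ∃ p : G.Walk a b, Odd p.length
  · obtain ⟨p, hp⟩ := hb
    obtain ⟨q, hq, hpar⟩ := hpath p
    exact ⟨q, hq.isTrail, by grind⟩
  exfalso
  classical
  have hdvd : ∀ P : V → Prop, ∀ [DecidablePred P], (∀ v, P v → G.Reachable a v) →
      k ∣ ∑ v ∈ Finset.univ.filter P, G.degree v + (if P a then 1 else 0) +
        (if P b then 1 else 0) := by
    intro P _ hP
    have := Finset.dvd_sum (s := Finset.univ.filter P) fun v hv =>
      h.dvd_degree v (hP v (Finset.mem_filter.mp hv).2)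
    simpa [Finset.sum_add_distrib] using this
  have ha_odd : ¬∃ p : G.Walk a a, Odd p.length := fun ⟨p, hp⟩ => by
    obtain ⟨q, hq, hpar⟩ := hpath p
    rw [Walk.length_eq_zero_iff.mpr (Walk.isPath_iff_nil.mp hq)] at hpar
    grind
  have hb_even : ∃ p : G.Walk a b, Even p.length :=
    let ⟨p⟩ := h.reachable; ⟨p, Nat.not_odd_iff_even.mp fun hp => hb ⟨p, hp⟩⟩
  have h₁ := hdvd (fun v => ∃ p : G.Walk a v, Even p.length) fun v ⟨p, _⟩ => ⟨p⟩
  have h₂ := hdvd (fun v => ∃ p : G.Walk a v, Odd p.length) fun v ⟨p, _⟩ => ⟨p⟩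
  rw [if_pos ⟨.nil, by simp⟩, if_pos hb_even, sum_degrees_even_walks_eq_sum_degrees_odd_walks] at h₁
  rw [if_neg ha_odd, if_neg hb, add_zero, add_zero] at h₂
  exact hk (by simpa [add_assoc] using (Nat.dvd_add_right h₂).mp h₁)

theorem IsDivisibleChain.exists_odd_trail (hk : ¬k ∣ 2) (h : IsDivisibleChain k G a b) :
    ∃ T : G.Walk a b, T.IsTrail ∧ Odd T.length := by
  suffices ∀ (G : SimpleGraph V) [DecidableRel G.Adj] {a b : V}, IsDivisibleChain k G a b →
      ∃ T : G.Walk a b, T.IsTrail ∧ Odd T.length from this G h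
  intro G
  induction G using WellFoundedLT.induction with
  | _ G ih =>
  intro _ a b h
  by_cases hbr : ∃ u v, G.Reachable a u ∧ G.Adj u v ∧ G.IsBridge s(u, v)
  · obtain ⟨u, v, hu, huv, hb⟩ := hbr
    exact h.exists_odd_trail_of_isBridge hu huv hb fun x y =>
      ih _ (deleteEdges_singleton_lt huv)
  by_cases hcyc : ∃ z, G.Reachable a z ∧ ∃ C : G.Walk z z, C.IsCycle ∧ Odd C.length
  · obtain ⟨z, hz, C, hC, hodd⟩ := hcyc
    push Not at hbr
    exact exists_odd_trail_of_bridgeless (fun u v hu huv => not_not.mp (hbr u v hu huv))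
      hC.isTrail hodd hz h.reachable
  · push Not at hcyc
    exact h.exists_odd_trail_of_forall_not_odd_cycle hk hcyc

end DivisibleChain

end SimpleGraph

theorem TwoEdgeConnected.isDivisibleChain_deleteEdges {V : Type*} [Fintype V] [DecidableEq V]
    {G : SimpleGraph V} [DecidableRel G.Adj] {k : ℕ} (hG : TwoEdgeConnected G)
    (hdeg : ∀ v, k ∣ G.degree v) {x y : V} (hxy : G.Adj x y) :
    IsDivisibleChain k (G.deleteEdges {s(x, y)}) x y where
  reachable := (hG.2 _ hxy).preconnected x y
  dvd_degree v _ := by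
    rw [degree_deleteEdges_add hxy]
    exact hdeg v
  not_reachable_of_isBridge p q _ hpq hb hxy' := by
    have hcomm : (G.deleteEdges {s(p, q)}).deleteEdges {s(x, y)} =
        (G.deleteEdges {s(x, y)}).deleteEdges {s(p, q)} := by
      rw [deleteEdges_deleteEdges, deleteEdges_deleteEdges, Set.union_comm]
    have hconn := (hG.2 _ (deleteEdges_le _ hpq)).connected_delete_edge_of_not_isBridge
      (x := x) (y := y) (by rw [isBridge_iff, not_not, hcomm]; exact hxy')
    rw [hcomm] at hconn
    exact hb (hconn.preconnected p q)

/-- If `G` is 2-edge-connected and every vertex degree is divisible by some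
`k ≥ 3`, then every edge of `G` is contained in an even circuit. -/
theorem stmt_9 {V : Type*} [Fintype V] (G : SimpleGraph V) [DecidableRel G.Adj]
    (hG : TwoEdgeConnected G) (k : ℕ) (hk : 3 ≤ k) (hdeg : ∀ v : V, k ∣ G.degree v) :
    ∀ e ∈ G.edgeSet, ∃ (b : V) (D : G.Walk b b),
      D.IsCircuit ∧ Even D.length ∧ e ∈ D.edges := by
  classical
  intro e he
  induction e with
  | h x y =>
  have hk2 : ¬k ∣ 2 := fun h => by have := Nat.le_of_dvd two_pos h; omega
  obtain ⟨T, hT, hodd⟩ := (hG.isDivisibleChain_deleteEdges hdeg he).exists_odd_trail hk2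
  have hxy : s(y, x) ∉ T.edges := fun h => by
    simpa [edgeSet_deleteEdges, Sym2.eq_swap] using T.edges_subset_edgeSet h
  refine ⟨y, .cons (G.adj_symm he) (T.mapLe (deleteEdges_le _)), ?_, ?_, ?_⟩
  · exact (Walk.isCircuit_def _).mpr ⟨(Walk.isTrail_cons _ _).mpr
      ⟨hT.mapLe _, by rwa [Walk.edges_mapLe_eq_edges]⟩, by simp⟩
  · simpa [Walk.length_mapLe, Nat.even_add_one] using hodd
  · simp [Sym2.eq_swap]
end

section
/- Let G be a 2-edge-connected simple graph and let v be a vertex of G with degree at least 3. Then there exists a circuit of even length in G containing the vertex v. -/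
/-!
Any edge at `v` is not a bridge, so it lies on a cycle `C` through `v`. If `C` is even we are done.
Otherwise `C` uses only two of the edges at `v`, so a third edge `vw` is off `C`; since `vw` is
not a bridge, `w` reaches `C` without using `vw`, and the first such arrival gives an ear `R`
from `v` to a vertex `x` of `C`, edge-disjoint from `C`. Splitting `C` at `x` into arcs `T` and `S`,
the closed trails `R + S` and `R + T⁻¹` have total length `2|R| + |C|`, which is odd, so one of
them is even.
-/

open SimpleGraph

namespace SimpleGraph

variable {V : Type*} {G : SimpleGraph V}

lemma _root_.TwoEdgeConnected.not_isBridge (hG : TwoEdgeConnected G) {v w : V} (h : G.Adj v w) :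
    ¬ G.IsBridge s(v, w) :=
  fun hb ↦ hb ((hG.2 _ h).preconnected v w)

lemma exists_isCycle_of_not_isBridge {v u : V} (h : G.Adj v u) (hb : ¬ G.IsBridge s(v, u)) :
    ∃ C : G.Walk v v, C.IsCycle := by
  classical
  obtain ⟨a, C, hC, he⟩ :=
    adj_and_reachable_delete_edges_iff_exists_cycle.1 ⟨h, not_not.1 hb⟩
  exact ⟨_, hC.rotate (C.fst_mem_support_of_mem_edges he)⟩

lemma Walk.IsCycle.exists_adj_notMem_edges {u v : V} [Fintype (G.neighborSet v)]
    {C : G.Walk u u} (hC : C.IsCycle) (hv : v ∈ C.support) (hdeg : 3 ≤ G.degree v) :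
    ∃ w, G.Adj v w ∧ s(v, w) ∉ C.edges := by
  by_contra! hall
  have hsub : C.toSubgraph.neighborSet v = G.neighborSet v :=
    (C.toSubgraph.neighborSet_subset v).antisymm fun w hw ↦
      Walk.adj_toSubgraph_iff_mem_edges.2 (hall w hw)
  have hcard := hC.ncard_neighborSet_toSubgraph_eq_two hv
  rw [hsub, Set.ncard_eq_toFinset_card', Set.toFinset_card, card_neighborSet_eq_degree] at hcard
  omega

lemma Walk.exists_walk_to_support_edges_disjoint {a b w y : V} (C : G.Walk a b) (P : G.Walk w y)
    (hy : y ∈ C.support) :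
    ∃ x ∈ C.support, ∃ P₀ : G.Walk w x, P₀.edges ⊆ P.edges ∧ P₀.edges.Disjoint C.edges := by
  induction P with
  | nil => exact ⟨_, hy, Walk.nil, by simp, by simp⟩
  | @cons c d y h P ih =>
    by_cases hc : c ∈ C.support
    · exact ⟨c, hc, Walk.nil, by simp, by simp⟩
    obtain ⟨x, hx, P₀, hsub, hdisj⟩ := ih hy
    refine ⟨x, hx, Walk.cons h P₀, List.cons_subset_cons _ hsub, ?_⟩
    rw [Walk.edges_cons, List.disjoint_cons_left]
    exact ⟨fun he ↦ hc (C.fst_mem_support_of_mem_edges he), hdisj⟩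

lemma Walk.exists_isTrail_edges_disjoint_of_not_isBridge {a b v w : V} (C : G.Walk a b)
    (hv : v ∈ C.support) (hvw : G.Adj v w) (hb : ¬ G.IsBridge s(v, w)) (hwC : s(v, w) ∉ C.edges) :
    ∃ x ∈ C.support, ∃ R : G.Walk v x,
      R.IsTrail ∧ R.length ≠ 0 ∧ R.edges.Disjoint C.edges := by
  classical
  obtain ⟨P, hP⟩ := reachable_deleteEdges_iff_exists_walk.1
    ((not_not.1 hb).symm : (G.deleteEdges {s(v, w)}).Reachable w v)
  obtain ⟨x, hx, P₀, hsub, hdisj⟩ := C.exists_walk_to_support_edges_disjoint P hv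
  have hbyp : P₀.bypass.edges ⊆ P₀.edges := P₀.edges_bypass_subset_edges
  refine ⟨x, hx, Walk.cons hvw P₀.bypass, ?_, by simp, ?_⟩
  · exact (Walk.isTrail_cons _ _).2 ⟨P₀.bypass_isPath.isTrail, fun he ↦ hP (hsub (hbyp he))⟩
  · rw [Walk.edges_cons, List.disjoint_cons_left]
    exact ⟨hwC, List.disjoint_of_subset_left hbyp hdisj⟩

lemma Walk.IsCircuit.exists_even_of_ear {v x : V} {C : G.Walk v v} (hC : C.IsCircuit)
    (hx : x ∈ C.support) {R : G.Walk v x} (hR : R.IsTrail) (hRlen : R.length ≠ 0)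
    (hRC : R.edges.Disjoint C.edges) :
    ∃ D : G.Walk v v, D.IsCircuit ∧ Even D.length := by
  classical
  by_cases hCeven : Even C.length
  · exact ⟨C, hC, hCeven⟩
  have hcircuit : ∀ S : G.Walk x v, S.IsTrail → S.edges ⊆ C.edges → (R.append S).IsCircuit :=
    fun S hS hSC ↦ (Walk.isCircuit_def _).2
      ⟨(Walk.isTrail_append _ _).2 ⟨hR, hS, List.disjoint_of_subset_right hSC hRC⟩,
        fun h ↦ hRlen (by
          have hlen := congrArg Walk.length h
          simp only [Walk.length_append, Walk.length_nil] at hlen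
          omega)⟩
  set T := C.takeUntil x hx
  set S := C.dropUntil x hx
  have hlen : T.length + S.length = C.length := by
    rw [← Walk.length_append, C.take_spec hx]
  have hT : T.reverse.edges ⊆ C.edges := fun e he ↦
    C.edges_takeUntil_subset_edges hx (by simpa using he)
  rcases Nat.even_or_odd (R.append S).length with hRS | hRS
  · exact ⟨_, hcircuit S (hC.isTrail.dropUntil hx) (C.edges_dropUntil_subset_edges hx), hRS⟩
  · refine ⟨_, hcircuit T.reverse (hC.isTrail.takeUntil hx).reverse hT, ?_⟩
    rw [Walk.length_append, Walk.length_reverse]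
    rw [Walk.length_append] at hRS
    rw [Nat.not_even_iff_odd] at hCeven
    grind

end SimpleGraph

/-- In a 2-edge-connected graph, every vertex of degree at least 3 lies on an
even circuit. -/
theorem stmt_11 {V : Type*} [Fintype V] (G : SimpleGraph V) [DecidableRel G.Adj]
    (hG : TwoEdgeConnected G) (v : V) (hdeg : 3 ≤ G.degree v) :
    ∃ (b : V) (D : G.Walk b b), D.IsCircuit ∧ Even D.length ∧ v ∈ D.support := by
  obtain ⟨u, hvu⟩ := (G.degree_pos_iff_exists_adj v).1 (by omega)
  obtain ⟨C, hC⟩ := exists_isCycle_of_not_isBridge hvu (hG.not_isBridge hvu)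
  obtain ⟨w, hvw, hwC⟩ := hC.exists_adj_notMem_edges C.start_mem_support hdeg
  obtain ⟨x, hx, R, hR, hRlen, hRC⟩ :=
    C.exists_isTrail_edges_disjoint_of_not_isBridge C.start_mem_support hvw
      (hG.not_isBridge hvw) hwC
  obtain ⟨D, hD, hDeven⟩ := hC.isCircuit.exists_even_of_ear hx hR hRlen hRC
  exact ⟨v, D, hD, hDeven, D.start_mem_support⟩
end

section
/- Let G be a 2-edge-connected simple graph that is not bipartite. Then every edge of G is contained in a circuit of odd length. -/
open SimpleGraph

/-!
Call a set `T` of edges *parity rich* if any two vertices covered by `T` are joined by trails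
inside `T` of both parities, and every edge `xy ∈ T` closes an odd circuit inside `T`. The edges of
an odd cycle form a parity rich set, and parity richness survives adding an *ear*: a trail whose
ends are covered by `T` and whose edges avoid `T` (to join two vertices, walk along the ear to
its ends and let `T` correct the parity). In a 2-edge-connected graph every nonempty proper
subset of the edges has an ear: a chord between covered vertices, or an edge leaving the covered
vertices continued, avoiding that edge, until it first returns to them. Growing from an odd cycle
of the non-bipartite graph therefore makes the whole edge set parity rich.
-/

namespace SimpleGraph

variable {V : Type*} {G : SimpleGraph V}

namespace Walk

theorem isTrail_append_iff {u v w : V} {p : G.Walk u v} {q : G.Walk v w} :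
    (p.append q).IsTrail ↔ p.IsTrail ∧ q.IsTrail ∧ Disjoint p.edgeSet q.edgeSet := by
  simp only [isTrail_def, edges_append, List.nodup_append, Set.disjoint_left, mem_edgeSet]
  grind

theorem exists_eq_append_cons_of_mem_edges {u v x y : V} {p : G.Walk u v}
    (hp : s(x, y) ∈ p.edges) :
    (∃ (p₁ : G.Walk u x) (h : G.Adj x y) (p₂ : G.Walk y v), p = p₁.append (cons h p₂)) ∨
      ∃ (p₁ : G.Walk u y) (h : G.Adj y x) (p₂ : G.Walk x v), p = p₁.append (cons h p₂) := by
  induction p with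
  | nil => simp at hp
  | cons h p ih =>
    rcases List.mem_cons.mp hp with hp | hp
    · rcases Sym2.eq_iff.mp hp with ⟨rfl, rfl⟩ | ⟨rfl, rfl⟩
      · exact Or.inl ⟨nil, h, p, rfl⟩
      · exact Or.inr ⟨nil, h, p, rfl⟩
    · rcases ih hp with ⟨p₁, h', p₂, rfl⟩ | ⟨p₁, h', p₂, rfl⟩
      · exact Or.inl ⟨cons h p₁, h', p₂, rfl⟩
      · exact Or.inr ⟨cons h p₁, h', p₂, rfl⟩

theorem exists_eq_append_append_of_mem_support {u v a b : V} {p : G.Walk u v}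
    (ha : a ∈ p.support) (hb : b ∈ p.support) :
    (∃ (p₁ : G.Walk u a) (p₂ : G.Walk a b) (p₃ : G.Walk b v), p = p₁.append (p₂.append p₃)) ∨
      ∃ (p₁ : G.Walk u b) (p₂ : G.Walk b a) (p₃ : G.Walk a v), p = p₁.append (p₂.append p₃) := by
  obtain ⟨q, r, rfl⟩ := mem_support_iff_exists_append.mp ha
  rcases (mem_support_append_iff q r).mp hb with hb | hb
  · obtain ⟨q₁, q₂, rfl⟩ := mem_support_iff_exists_append.mp hb
    exact Or.inr ⟨q₁, q₂, r, (append_assoc _ _ _).symm⟩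
  · obtain ⟨r₁, r₂, rfl⟩ := mem_support_iff_exists_append.mp hb
    exact Or.inl ⟨q, r₁, r₂, rfl⟩

theorem exists_eq_append_first_mem_s12 (S : Set V) {u v : V} (p : G.Walk u v)
    (hv : v ∈ S) :
    ∃ (z : V) (p₁ : G.Walk u z) (p₂ : G.Walk z v), p = p₁.append p₂ ∧ z ∈ S ∧
      ∀ w ∈ p₁.support, w ∈ S → w = z := by
  induction p with
  | nil => exact ⟨_, nil, nil, rfl, hv, by simp⟩
  | @cons u w v h p ih =>
    by_cases hu : u ∈ S
    · exact ⟨u, nil, cons h p, rfl, hu, by simp⟩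
    · obtain ⟨z, p₁, p₂, rfl, hz, hfirst⟩ := ih hv
      refine ⟨z, cons h p₁, p₂, rfl, hz, ?_⟩
      simp only [support_cons, List.mem_cons, forall_eq_or_imp]
      exact ⟨fun hu' => absurd hu' hu, hfirst⟩

theorem exists_isPath_or_odd_isCycle {u v : V} (p : G.Walk u v) :
    (∃ q : G.Walk u v, q.IsPath ∧ (Even q.length ↔ Even p.length)) ∨
      ∃ (w : V) (c : G.Walk w w), c.IsCycle ∧ Odd c.length := by
  classical
  induction p with
  | nil => exact Or.inl ⟨nil, .nil, Iff.rfl⟩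
  | @cons u w v h p ih =>
    obtain ⟨q, hq, hpar⟩ | hcycle := ih
    · by_cases hu : u ∈ q.support
      · obtain ⟨q₁, q₂, rfl⟩ := mem_support_iff_exists_append.mp hu
        rcases Nat.even_or_odd (cons h q₁).length with heven | hodd
        · refine Or.inl ⟨q₂, hq.of_append_right, ?_⟩
          simp only [length_cons, length_append, Nat.even_add_one, Nat.even_add] at heven hpar ⊢
          tauto
        · -- `cons h q₁` fails to be a cycle only by going back along `h`, which is even.
          refine Or.inr ⟨u, cons h q₁, (cons_isCycle_iff _ _).mpr ⟨hq.of_append_left, ?_⟩, hodd⟩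
          intro hmem
          have := hq.of_append_left.length_eq_one_of_mem_edges (Sym2.eq_swap ▸ hmem)
          simp [this, Nat.odd_iff] at hodd
      · exact Or.inl ⟨cons h q, hq.cons hu, by simp [Nat.even_add_one, hpar]⟩
    · exact Or.inr hcycle

theorem IsTrail.exists_rotation {u x : V} {c : G.Walk u u} (hc : c.IsTrail)
    (hx : x ∈ c.support) :
    ∃ c' : G.Walk x x, c'.IsTrail ∧ c'.edgeSet = c.edgeSet ∧ c'.length = c.length := by
  obtain ⟨q, r, rfl⟩ := mem_support_iff_exists_append.mp hx
  rw [isTrail_append_iff] at hc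
  exact ⟨r.append q, isTrail_append_iff.mpr ⟨hc.2.1, hc.1, hc.2.2.symm⟩,
    by simp [edgeSet_append, Set.union_comm], by simp [add_comm]⟩

end Walk

theorem colorable_two_of_forall_even_length (h : ∀ (u : V) (c : G.Walk u u), Even c.length) :
    G.Colorable 2 := by
  let r : V → V := fun v => (G.connectedComponentMk v).out
  have hr : ∀ v, G.Reachable (r v) v := fun v => ConnectedComponent.exact (Quot.out_eq _)
  let c : G.Coloring Bool := .mk (fun v => decide (Even (G.dist (r v) v))) fun {a b} hab => by
    have hrab : r b = r a := by simp only [r, ConnectedComponent.sound hab.reachable]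
    obtain ⟨pa, hpa⟩ := (hr a).exists_walk_length_eq_dist
    obtain ⟨pb, hpb⟩ := (hrab ▸ hr b : G.Reachable (r a) b).exists_walk_length_eq_dist
    have := h _ (pa.append (Walk.cons hab pb.reverse))
    simp only [Walk.length_append, Walk.length_cons, Walk.length_reverse, hpa, hpb] at this
    simp only [hrab, ne_eq, decide_eq_decide]
    grind
  simpa using c.colorable

theorem exists_odd_isCycle_of_not_colorable_two (h : ¬G.Colorable 2) :
    ∃ (u : V) (c : G.Walk u u), c.IsCycle ∧ Odd c.length := by
  by_contra hno
  refine h (colorable_two_of_forall_even_length fun u c => ?_)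
  rcases c.exists_isPath_or_odd_isCycle with ⟨q, hq, hpar⟩ | hcycle
  · simp [← hpar, Walk.length_eq_zero_iff.mpr (Walk.isPath_iff_nil.mp hq)]
  · exact absurd hcycle hno

def incidentVertices (T : Set (Sym2 V)) : Set V := {v | ∃ e ∈ T, v ∈ e}

theorem Walk.mem_support_of_mem_incidentVertices {u v x : V} {p : G.Walk u v}
    (hx : x ∈ incidentVertices p.edgeSet) : x ∈ p.support := by
  obtain ⟨e, he, hxe⟩ := hx
  induction e using Sym2.ind with
  | h a b =>
    rcases Sym2.mem_iff.mp hxe with rfl | rfl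
    · exact p.fst_mem_support_of_mem_edges he
    · exact p.snd_mem_support_of_mem_edges he

/-- In `exists_trail` the number `m` prescribes the parity; `exists_even_trail` says that every edge
`xy` of `T` closes an odd circuit inside `T`. -/
structure IsParityRich (G : SimpleGraph V) (T : Set (Sym2 V)) : Prop where
  exists_trail : ∀ ⦃x y : V⦄, x ∈ incidentVertices T → y ∈ incidentVertices T → ∀ m : ℕ,
    ∃ q : G.Walk x y, q.IsTrail ∧ q.edgeSet ⊆ T ∧ Even (q.length + m)
  exists_even_trail : ∀ ⦃x y : V⦄, s(x, y) ∈ T →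
    ∃ q : G.Walk x y, q.IsTrail ∧ q.edgeSet ⊆ T \ {s(x, y)} ∧ Even q.length

namespace Walk

theorem IsTrail.exists_trail_of_append_cons {u x y : V} {p₁ : G.Walk u x} {h : G.Adj x y}
    {p₂ : G.Walk y u} (hp : (p₁.append (cons h p₂)).IsTrail) :
    ∃ q : G.Walk y x, q.IsTrail ∧ q.edgeSet ⊆ (p₁.append (cons h p₂)).edgeSet \ {s(x, y)} ∧
      q.length + 1 = (p₁.append (cons h p₂)).length := by
  simp only [isTrail_append_iff, isTrail_cons, edgeSet_cons, Set.disjoint_insert_right] at hp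
  obtain ⟨hp₁, ⟨hp₂, hxy₂⟩, hxy₁, hdisj⟩ := hp
  refine ⟨p₂.append p₁, isTrail_append_iff.mpr ⟨hp₂, hp₁, hdisj.symm⟩, ?_, ?_⟩
  · intro e he
    rw [edgeSet_append, Set.mem_union] at he
    refine ⟨by simp only [edgeSet_append, edgeSet_cons]; grind, ?_⟩
    rintro rfl
    exact he.elim hxy₂ hxy₁
  · simp only [length_append, length_cons]
    omega

theorem IsTrail.isParityRich_edgeSet {u : V} {c : G.Walk u u} (hc : c.IsTrail)
    (hodd : Odd c.length) : IsParityRich G c.edgeSet where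
  exists_trail x y hx hy m := by
    obtain ⟨c', hc', hE, hL⟩ := hc.exists_rotation (mem_support_of_mem_incidentVertices hx)
    rw [← hE] at hy ⊢
    obtain ⟨q, r, rfl⟩ := mem_support_iff_exists_append.mp (mem_support_of_mem_incidentVertices hy)
    obtain ⟨hq, hr, -⟩ := isTrail_append_iff.mp hc'
    rcases Nat.even_or_odd (q.length + m) with hpar | hpar
    · exact ⟨q, hq, by simp [edgeSet_append], hpar⟩
    · refine ⟨r.reverse, (reverse_isTrail_iff r).mpr hr, by simp [edgeSet_append], ?_⟩
      rw [← hL, length_append] at hodd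
      rw [length_reverse]
      grind
  exists_even_trail x y hxy := by
    rcases exists_eq_append_cons_of_mem_edges hxy with ⟨p₁, h, p₂, rfl⟩ | ⟨p₁, h, p₂, rfl⟩
    · obtain ⟨q, hq, hqE, hL⟩ := hc.exists_trail_of_append_cons
      refine ⟨q.reverse, (reverse_isTrail_iff q).mpr hq, by simpa using hqE, ?_⟩
      rw [length_reverse]
      grind
    · obtain ⟨q, hq, hqE, hL⟩ := hc.exists_trail_of_append_cons
      refine ⟨q, hq, by simpa [Sym2.eq_swap] using hqE, ?_⟩
      grind

end Walk

theorem incidentVertices_union_edgeSet_subset (T : Set (Sym2 V)) {x z : V} (P : G.Walk x z) :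
    incidentVertices (T ∪ P.edgeSet) ⊆ incidentVertices T ∪ {v | v ∈ P.support} := by
  rintro v ⟨e, he | he, hve⟩
  · exact Or.inl ⟨e, he, hve⟩
  · exact Or.inr (Walk.mem_support_of_mem_incidentVertices ⟨e, he, hve⟩)

namespace IsParityRich

open Walk

variable {T : Set (Sym2 V)}

theorem exists_trail_via (hT : IsParityRich G T) {a x z b : V}
    (hx : x ∈ incidentVertices T) (hz : z ∈ incidentVertices T) {q₁ : G.Walk a x}
    {q₃ : G.Walk z b} (h₁ : q₁.IsTrail) (h₃ : q₃.IsTrail) (h₁₃ : Disjoint q₁.edgeSet q₃.edgeSet)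
    (h₁T : Disjoint q₁.edgeSet T) (h₃T : Disjoint q₃.edgeSet T) (m : ℕ) :
    ∃ q : G.Walk a b, q.IsTrail ∧ q.edgeSet ⊆ T ∪ q₁.edgeSet ∪ q₃.edgeSet ∧
      Even (q.length + m) := by
  obtain ⟨q, hq, hqT, hpar⟩ := hT.exists_trail hx hz (q₁.length + q₃.length + m)
  refine ⟨q₁.append (q.append q₃), ?_, ?_, ?_⟩
  · simp only [isTrail_append_iff, edgeSet_append, Set.disjoint_union_right]
    exact ⟨h₁, ⟨hq, h₃, (h₃T.mono_right hqT).symm⟩, h₁T.mono_right hqT, h₁₃⟩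
  · rw [edgeSet_append, edgeSet_append]
    tauto_set
  · rw [length_append, length_append]
    grind

theorem exists_trail_union (hT : IsParityRich G T) {x z : V} {P : G.Walk x z}
    (hP : P.IsTrail) (hx : x ∈ incidentVertices T) (hz : z ∈ incidentVertices T)
    (hPT : Disjoint P.edgeSet T) {a b : V} (ha : a ∈ incidentVertices (T ∪ P.edgeSet))
    (hb : b ∈ incidentVertices (T ∪ P.edgeSet)) (m : ℕ) :
    ∃ q : G.Walk a b, q.IsTrail ∧ q.edgeSet ⊆ T ∪ P.edgeSet ∧ Even (q.length + m) := by
  rcases incidentVertices_union_edgeSet_subset T P ha with haT | haP <;>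
    rcases incidentVertices_union_edgeSet_subset T P hb with hbT | hbP
  · obtain ⟨q, hq, hqT, hpar⟩ := hT.exists_trail haT hbT m
    exact ⟨q, hq, hqT.trans Set.subset_union_left, hpar⟩
  · obtain ⟨p₁, p₂, rfl⟩ := mem_support_iff_exists_append.mp hbP
    simp only [isTrail_append_iff, edgeSet_append, Set.disjoint_union_left] at hP hPT
    obtain ⟨q, hq, hqE, hpar⟩ :=
      hT.exists_trail_via haT hx .nil hP.1 (by simp) (by simp) hPT.1 m
    exact ⟨q, hq, hqE.trans (by rw [edgeSet_append]; tauto_set), hpar⟩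
  · obtain ⟨p₁, p₂, rfl⟩ := mem_support_iff_exists_append.mp haP
    simp only [isTrail_append_iff, edgeSet_append, Set.disjoint_union_left] at hP hPT
    obtain ⟨q, hq, hqE, hpar⟩ := hT.exists_trail_via hx hbT (q₁ := p₁.reverse) (q₃ := nil)
      (by simpa using hP.1) .nil (by simp) (by simpa using hPT.1) (by simp) m
    exact ⟨q, hq, hqE.trans (by rw [edgeSet_append, edgeSet_reverse]; tauto_set), hpar⟩
  · rcases exists_eq_append_append_of_mem_support haP hbP with
      ⟨p₁, p₂, p₃, rfl⟩ | ⟨p₁, p₂, p₃, rfl⟩ <;>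
    simp only [isTrail_append_iff, edgeSet_append, Set.disjoint_union_left,
      Set.disjoint_union_right] at hP hPT <;>
    obtain ⟨hp₁, ⟨-, hp₃, -⟩, -, h₁₃⟩ := hP <;> obtain ⟨h₁T, -, h₃T⟩ := hPT
    · obtain ⟨q, hq, hqE, hpar⟩ := hT.exists_trail_via hx hz (q₁ := p₁.reverse)
        (q₃ := p₃.reverse) (by simpa using hp₁) (by simpa using hp₃) (by simpa using h₁₃)
        (by simpa using h₁T) (by simpa using h₃T) m
      exact ⟨q, hq, hqE.trans (by simp only [edgeSet_append, edgeSet_reverse]; tauto_set), hpar⟩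
    · obtain ⟨q, hq, hqE, hpar⟩ := hT.exists_trail_via hz hx hp₃ hp₁ h₁₃.symm h₃T h₁T m
      exact ⟨q, hq, hqE.trans (by simp only [edgeSet_append]; tauto_set), hpar⟩

theorem exists_even_trail_union (hT : IsParityRich G T) {x z : V} {P : G.Walk x z}
    (hP : P.IsTrail) (hx : x ∈ incidentVertices T) (hz : z ∈ incidentVertices T)
    (hPT : Disjoint P.edgeSet T) {c d : V} (hcd : s(c, d) ∈ T ∪ P.edgeSet) :
    ∃ q : G.Walk c d, q.IsTrail ∧ q.edgeSet ⊆ (T ∪ P.edgeSet) \ {s(c, d)} ∧ Even q.length := by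
  rcases hcd with hcdT | hcdP
  · obtain ⟨q, hq, hqT, hpar⟩ := hT.exists_even_trail hcdT
    exact ⟨q, hq, hqT.trans (Set.sdiff_subset_sdiff_left Set.subset_union_left), hpar⟩
  rcases exists_eq_append_cons_of_mem_edges hcdP with ⟨p₁, h, p₃, rfl⟩ | ⟨p₁, h, p₃, rfl⟩ <;>
    simp only [isTrail_append_iff, isTrail_cons, edgeSet_append, edgeSet_cons,
      Set.disjoint_union_left, Set.disjoint_insert_right, Set.disjoint_insert_left] at hP hPT ⊢ <;>
    obtain ⟨hp₁, ⟨hp₃, hcd₃⟩, hcd₁, h₁₃⟩ := hP <;> obtain ⟨h₁T, hcdT, h₃T⟩ := hPT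
  · obtain ⟨q, hq, hqE, hpar⟩ := hT.exists_trail_via hx hz (q₁ := p₁.reverse)
      (q₃ := p₃.reverse) (by simpa using hp₁) (by simpa using hp₃) (by simpa using h₁₃)
      (by simpa using h₁T) (by simpa using h₃T) 0
    refine ⟨q, hq, Set.subset_sdiff_singleton (hqE.trans ?_) fun hq' => ?_, by simpa using hpar⟩
    · simp only [edgeSet_reverse]; tauto_set
    · have := hqE hq'
      simp only [edgeSet_reverse, Set.mem_union] at this
      exact this.elim (·.elim hcdT hcd₁) hcd₃
  · rw [Sym2.eq_swap] at hcd₁ hcd₃ hcdT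
    obtain ⟨q, hq, hqE, hpar⟩ := hT.exists_trail_via hz hx hp₃ hp₁ h₁₃.symm h₃T h₁T 0
    refine ⟨q, hq, Set.subset_sdiff_singleton (hqE.trans ?_) fun hq' => ?_, by simpa using hpar⟩
    · tauto_set
    · have := hqE hq'
      simp only [Set.mem_union] at this
      exact this.elim (·.elim hcdT hcd₃) hcd₁

theorem union_edgeSet (hT : IsParityRich G T) {x z : V} {P : G.Walk x z} (hP : P.IsTrail)
    (hx : x ∈ incidentVertices T) (hz : z ∈ incidentVertices T) (hPT : Disjoint P.edgeSet T) :
    IsParityRich G (T ∪ P.edgeSet) :=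
  ⟨fun _ _ ha hb => hT.exists_trail_union hP hx hz hPT ha hb,
    fun _ _ hcd => hT.exists_even_trail_union hP hx hz hPT hcd⟩

end IsParityRich

theorem IsEdgeConnected.exists_ear_of_adj (hG : G.IsEdgeConnected 2)
    {S : Set V} {x y : V} (h : G.Adj x y) (hx : x ∈ S) (hy : y ∉ S) :
    ∃ (z : V) (P : G.Walk x z), P.IsTrail ∧ z ∈ S ∧ s(x, y) ∈ P.edges ∧
      ∀ ⦃u v : V⦄, s(u, v) ∈ P.edges → u ∈ S → v ∉ S := by
  classical
  obtain ⟨R⟩ := isEdgeReachable_two.mp (hG y x) s(x, y)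
  let R' : G.Walk y x := R.bypass.mapLe (G.deleteEdges_le _)
  have hR' : R'.IsPath := R.bypass_isPath.mapLe _
  have hxyR' : s(x, y) ∉ R'.edges := fun hmem => by
    rw [← Walk.mem_edgeSet, Walk.edgeSet_mapLe_eq_edgeSet] at hmem
    have := R.bypass.edges_subset_edgeSet hmem
    simp [edgeSet_deleteEdges] at this
  obtain ⟨z, R₁, R₂, hR, hz, hfirst⟩ := R'.exists_eq_append_first_mem_s12 S hx
  rw [hR] at hR' hxyR'
  refine ⟨z, .cons h R₁, hR'.of_append_left.isTrail.cons h fun hm => hxyR' (by simp [hm]),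
    hz, by simp, fun u v huv hu hv => ?_⟩
  rcases List.mem_cons.mp huv with huv | huv
  · rcases Sym2.eq_iff.mp huv with ⟨rfl, rfl⟩ | ⟨rfl, rfl⟩
    · exact hy hv
    · exact hy hu
  · exact (G.mem_edgeSet.mp (R₁.edges_subset_edgeSet huv)).ne
      ((hfirst u (R₁.fst_mem_support_of_mem_edges huv) hu).trans
        (hfirst v (R₁.snd_mem_support_of_mem_edges huv) hv).symm)

theorem IsEdgeConnected.exists_ear (hG : G.IsEdgeConnected 2) {T : Set (Sym2 V)}
    (hTE : T ⊆ G.edgeSet) (hT : T.Nonempty) (hTne : T ≠ G.edgeSet) :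
    ∃ (x z : V) (P : G.Walk x z), P.IsTrail ∧ x ∈ incidentVertices T ∧
      z ∈ incidentVertices T ∧ P.edgeSet.Nonempty ∧ Disjoint P.edgeSet T := by
  obtain ⟨e, heE, heT⟩ := Set.exists_of_ssubset (hTE.ssubset_of_ne hTne)
  by_cases hS : ∃ w, w ∉ incidentVertices T
  swap
  · induction e using Sym2.ind with | h a b => ?_
    have hab : G.Adj a b := heE
    exact ⟨a, b, .cons hab .nil, by simp, not_exists_not.mp hS a, not_exists_not.mp hS b,
      ⟨s(a, b), by simp⟩, by simpa using heT⟩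
  obtain ⟨w, hw⟩ := hS
  obtain ⟨e₀, he₀⟩ := hT
  obtain ⟨d, -, hd₁, hd₂⟩ := (hG.preconnected two_ne_zero e₀.out.1 w).some.exists_boundary_dart
    _ (show e₀.out.1 ∈ incidentVertices T from ⟨e₀, he₀, Sym2.out_fst_mem e₀⟩) hw
  obtain ⟨z, P, hP, hz, hdP, hPS⟩ := hG.exists_ear_of_adj d.adj hd₁ hd₂
  refine ⟨_, z, P, hP, hd₁, hz, ⟨_, hdP⟩, Set.disjoint_left.mpr fun e heP heT => ?_⟩
  induction e using Sym2.ind with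
  | h u v => exact hPS heP ⟨_, heT, Sym2.mem_mk_left u v⟩ ⟨_, heT, Sym2.mem_mk_right u v⟩

theorem IsEdgeConnected.isParityRich_edgeSet [Finite V] (hG : G.IsEdgeConnected 2)
    {T : Set (Sym2 V)} (hTE : T ⊆ G.edgeSet) (hT : T.Nonempty) (hrich : IsParityRich G T) :
    IsParityRich G G.edgeSet := by
  obtain ⟨M, hTM, hM⟩ :=
    (Set.toFinite {M | M ⊆ G.edgeSet ∧ IsParityRich G M}).exists_le_maximal ⟨hTE, hrich⟩
  obtain ⟨hME, hMrich⟩ := hM.prop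
  obtain rfl | hne := eq_or_ne M G.edgeSet
  · exact hMrich
  obtain ⟨x, z, P, hP, hx, hz, ⟨e, he⟩, hPM⟩ := hG.exists_ear hME (hT.mono hTM) hne
  have hgrow := hM.2 ⟨Set.union_subset hME fun e he => P.edges_subset_edgeSet he,
    hMrich.union_edgeSet hP hx hz hPM⟩ Set.subset_union_left
  exact (Set.disjoint_left.mp hPM he (hgrow (Or.inr he))).elim

end SimpleGraph

theorem TwoEdgeConnected.isEdgeConnected_two {V : Type*} {G : SimpleGraph V}
    (hG : TwoEdgeConnected G) : G.IsEdgeConnected 2 := by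
  refine SimpleGraph.isEdgeConnected_two.mpr fun e => ?_
  by_cases he : e ∈ G.edgeSet
  · exact (hG.2 e he).preconnected
  · rw [deleteEdges_eq_self.mpr (Set.disjoint_singleton_right.mpr he)]
    exact hG.1.preconnected

/-- In a 2-edge-connected non-bipartite graph, every edge is contained in an
odd circuit. -/
theorem stmt_12 {V : Type*} [Fintype V] (G : SimpleGraph V) (hG : TwoEdgeConnected G)
    (hbip : ¬ G.Colorable 2) :
    ∀ e ∈ G.edgeSet, ∃ (b : V) (D : G.Walk b b),
      D.IsCircuit ∧ Odd D.length ∧ e ∈ D.edges := by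
  obtain ⟨u, C, hC, hodd⟩ := exists_odd_isCycle_of_not_colorable_two hbip
  have hCE : C.edgeSet.Nonempty :=
    List.length_pos_iff_exists_mem.mp (by rw [Walk.length_edges]; exact hodd.pos)
  have hrich : IsParityRich G G.edgeSet :=
    hG.isEdgeConnected_two.isParityRich_edgeSet (fun e he => C.edges_subset_edgeSet he) hCE
      (hC.isCircuit.isTrail.isParityRich_edgeSet hodd)
  intro e he
  induction e using Sym2.ind with | h x y => ?_
  obtain ⟨q, hq, hqE, heven⟩ := hrich.exists_even_trail he
  have hyx : G.Adj y x := (G.mem_edgeSet.mp he).symm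
  refine ⟨y, .cons hyx q, (Walk.cons hyx q).isCircuit_def.mpr ⟨hq.cons hyx fun h => ?_, by simp⟩,
    by simpa [Nat.odd_add_one] using heven, by simp [Sym2.eq_swap]⟩
  exact (hqE h).2 Sym2.eq_swap
end

section
/- Let G be a 2-connected simple graph, let k ≥ 3 be a positive integer such that the degree of every vertex of G is divisible by k, and let e = {u, v} be an edge of G lying on some cycle of odd length. Then the graph G − e (G with the edge e deleted) is not bipartite. -/
/-!
Let `c` be a 2-colouring of `G - uv`. If `c u ≠ c v`, then `c` also colours `G`, which is
impossible because `G` has an odd closed walk. If `c u = c v`, let `A` be the colour class of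
`u` and `v` and `B` the other one. In `G - uv` the degree sums over `A` and over `B` are equal
(both count the edges), and putting `uv` back adds `2` to the sum over `A` and nothing to the
sum over `B`. All degrees in `G` are divisible by `k`, hence `k ∣ 2`, contradicting `k ≥ 3`.
-/

open SimpleGraph Finset

namespace SimpleGraph

variable {V : Type*} {G : SimpleGraph V} {u v : V}

def Coloring.ofDeleteEdge {α : Type*} (c : (G.deleteEdges {s(u, v)}).Coloring α)
    (h : c u ≠ c v) : G.Coloring α :=
  Coloring.mk c fun {x y} hxy => by
    by_cases hxy' : s(x, y) = s(u, v)
    · rcases Sym2.eq_iff.mp hxy' with ⟨rfl, rfl⟩ | ⟨rfl, rfl⟩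
      exacts [h, Ne.symm h]
    · exact c.valid (deleteEdges_adj.mpr ⟨hxy, hxy'⟩)

theorem Coloring.isBipartiteWith_filter [Fintype V] (c : G.Coloring (Fin 2)) (i : Fin 2) :
    G.IsBipartiteWith (univ.filter (c · = i) : Finset V) (univ.filter (c · ≠ i) : Finset V) where
  disjoint := by
    rw [Finset.disjoint_coe]
    exact disjoint_filter_filter_not _ _ _
  mem_of_adj x y hxy := by
    have := c.valid hxy
    simp only [coe_filter, mem_univ, true_and, Set.mem_ofPred_eq]
    omega

variable [Fintype V] [DecidableEq V] [DecidableRel G.Adj]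

theorem neighborFinset_deleteEdges_singleton_left (u v : V) :
    (G.deleteEdges {s(u, v)}).neighborFinset u = (G.neighborFinset u).erase v := by
  ext y
  simp only [mem_neighborFinset, deleteEdges_adj, Set.mem_singleton_iff, mem_erase]
  grind [G.ne_of_adj]

theorem neighborFinset_deleteEdges_singleton_of_ne {x : V} (hu : x ≠ u) (hv : x ≠ v) :
    (G.deleteEdges {s(u, v)}).neighborFinset x = G.neighborFinset x := by
  ext y
  simp [hu, hv]

theorem degree_deleteEdges_singleton_left_add_one (huv : G.Adj u v) :
    (G.deleteEdges {s(u, v)}).degree u + 1 = G.degree u := by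
  rw [← card_neighborFinset_eq_degree, ← card_neighborFinset_eq_degree,
    neighborFinset_deleteEdges_singleton_left, card_erase_add_one (by simpa using huv)]

theorem degree_deleteEdges_singleton_add (huv : G.Adj u v) (x : V) :
    (G.deleteEdges {s(u, v)}).degree x + ((if x = u then 1 else 0) + (if x = v then 1 else 0)) =
      G.degree x := by
  by_cases hxu : x = u
  · subst hxu
    simpa [huv.ne] using degree_deleteEdges_singleton_left_add_one huv
  by_cases hxv : x = v
  · subst hxv
    have := degree_deleteEdges_singleton_left_add_one huv.symm
    rw [Sym2.eq_swap] at this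
    simpa [hxu] using this
  simp [hxu, hxv, ← card_neighborFinset_eq_degree, neighborFinset_deleteEdges_singleton_of_ne]

theorem dvd_two_of_coloring_deleteEdges {k : ℕ} (hdeg : ∀ w, k ∣ G.degree w) (huv : G.Adj u v)
    (c : (G.deleteEdges {s(u, v)}).Coloring (Fin 2)) (hc : c u = c v) : k ∣ 2 := by
  let H := G.deleteEdges {s(u, v)}
  set A := univ.filter (c · = c u)
  set B := univ.filter (c · ≠ c u)
  have hAB : ∑ x ∈ A, H.degree x = ∑ x ∈ B, H.degree x :=
    isBipartiteWith_sum_degrees_eq (c.isBipartiteWith_filter (c u))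
  have hB : ∑ x ∈ B, H.degree x = ∑ x ∈ B, G.degree x := by
    refine sum_congr rfl fun x hx => ?_
    have hxu : x ≠ u := by rintro rfl; simp [B] at hx
    have hxv : x ≠ v := by rintro rfl; simp [B, hc] at hx
    simpa [hxu, hxv] using degree_deleteEdges_singleton_add huv x
  have hA : ∑ x ∈ A, H.degree x + 2 = ∑ x ∈ A, G.degree x := by
    simp_rw [← degree_deleteEdges_singleton_add huv, sum_add_distrib, sum_ite_eq']
    simp [A, H, hc]
  have hkA : k ∣ ∑ x ∈ A, H.degree x := hAB ▸ hB ▸ dvd_sum fun x _ => hdeg x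
  exact (Nat.dvd_add_right hkA).mp (hA ▸ dvd_sum fun x _ => hdeg x)

end SimpleGraph

theorem stmt_14_general {V : Type*} [Fintype V] (G : SimpleGraph V) [DecidableRel G.Adj]
    (k : ℕ) (hk : 3 ≤ k) (hdeg : ∀ w : V, k ∣ G.degree w)
    (u v : V) (huv : G.Adj u v)
    (hodd : ∃ (a : V) (C : G.Walk a a), C.IsCycle ∧ Odd C.length ∧ s(u, v) ∈ C.edges) :
    ¬ (G.deleteEdges {s(u, v)}).Colorable 2 := by
  classical
  rintro ⟨c⟩
  by_cases hc : c u = c v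
  · have := Nat.le_of_dvd two_pos (dvd_two_of_coloring_deleteEdges hdeg huv c hc)
    omega
  · obtain ⟨a, C, -, hCodd, -⟩ := hodd
    have h3 := C.three_le_chromaticNumber_of_odd_loop hCodd
    have h2 := (Coloring.ofDeleteEdge c hc).colorable.chromaticNumber_le
    exact absurd (h3.trans h2) (by decide)

/-- If `G` is 2-connected with all degrees divisible by some `k ≥ 3`, and the
edge `{u, v}` lies on an odd cycle, then `G − {u, v}` is not bipartite. -/
theorem stmt_14 {V : Type*} [Fintype V] (G : SimpleGraph V) [DecidableRel G.Adj]
    (hG : TwoConnected G) (k : ℕ) (hk : 3 ≤ k) (hdeg : ∀ w : V, k ∣ G.degree w)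
    (u v : V) (huv : G.Adj u v)
    (hodd : ∃ (a : V) (C : G.Walk a a), C.IsCycle ∧ Odd C.length ∧ s(u, v) ∈ C.edges) :
    ¬ (G.deleteEdges {s(u, v)}).Colorable 2 :=
  stmt_14_general G k hk hdeg u v huv hodd
end
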